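/- arXiv:1401.7895 — 3 statements merged into one kernel-verified Lean document; each statement's English description precedes it below -/
import Mathlib

section
/- Let A be an algebra of subsets of a nonempty set Ω, and let M be a set of bounded finitely additive set functions on A. Define A(M) as the set of all countable convex combinations ∑ₙ αₙ |μₙ|/(1 ∨ ‖μₙ‖) with μₙ ∈ M, αₙ ≥ 0, ∑ₙ αₙ = 1, and L(M) as the set of ν ∈ ba(A) absolutely continuous with respect to some m ∈ A(M). Then L(M) is a band (normal sublattice) of ba(A): it is solid (|ν₁| ≤ |ν| and ν ∈ L(M) imply ν₁ ∈ L(M)) and closed under existing suprema of arbitrary nonempty families. -/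
/-!
Solidity is immediate, since absolute continuity only involves the variation `|ν|`.
If `ν = ⨆ F` in ba(𝒜), the pointwise supremum of the finite suprema `F i₁ ∨ ⋯ ∨ F iₖ` is
again finitely additive, hence equals `ν`; so some finite supremum `g` has `(ν - g)(Ω) < ε`,
and as `ν - g ≥ 0` this gives `|ν| ≤ |g| + ε ≤ |F i₁| + ⋯ + |F iₖ| + ε` on `𝒜`. Taking
`ε = 1/(n+1)` involves only countably many `F i`; a single countable convex combination of
the elements of `𝐀(M)` controlling each of them controls all of them, and hence `ν`.
-/

open Set Filter Topology

variable {Ω : Type*}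

/-- `𝒜` is an algebra of subsets of `Ω`. -/
def IsAlg (𝒜 : Set (Set Ω)) : Prop :=
  ∅ ∈ 𝒜 ∧ Set.univ ∈ 𝒜 ∧ (∀ A ∈ 𝒜, Aᶜ ∈ 𝒜) ∧ ∀ A ∈ 𝒜, ∀ B ∈ 𝒜, A ∪ B ∈ 𝒜

/-- bounded finitely additive set function (element of ba(𝒜)). -/
def IsFinAdd (𝒜 : Set (Set Ω)) (μ : Set Ω → ℝ) : Prop :=
  μ ∅ = 0 ∧
  (∀ A ∈ 𝒜, ∀ B ∈ 𝒜, Disjoint A B → μ (A ∪ B) = μ A + μ B) ∧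
  ∃ C : ℝ, ∀ A ∈ 𝒜, |μ A| ≤ C

def IsPos (𝒜 : Set (Set Ω)) (μ : Set Ω → ℝ) : Prop := ∀ A ∈ 𝒜, 0 ≤ μ A

def IsCtblAdd (𝒜 : Set (Set Ω)) (μ : Set Ω → ℝ) : Prop :=
  ∀ A : ℕ → Set Ω, (∀ n, A n ∈ 𝒜) → Pairwise (Function.onFun Disjoint A) →
    (⋃ n, A n) ∈ 𝒜 → HasSum (fun n => μ (A n)) (μ (⋃ n, A n))

/-- total variation of `μ` on `A`. -/
noncomputable def tv (𝒜 : Set (Set Ω)) (μ : Set Ω → ℝ) (A : Set Ω) : ℝ :=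
  sSup {x | ∃ B ∈ 𝒜, B ⊆ A ∧ x = μ B - μ (A \ B)}

noncomputable def tvNorm (𝒜 : Set (Set Ω)) (μ : Set Ω → ℝ) : ℝ := tv 𝒜 μ Set.univ

/-- `ν ≪ μ`, absolute continuity in the ε-δ sense. -/
def AC (𝒜 : Set (Set Ω)) (ν μ : Set Ω → ℝ) : Prop :=
  ∀ ε > (0:ℝ), ∃ δ > (0:ℝ), ∀ E ∈ 𝒜, tv 𝒜 μ E < δ → tv 𝒜 ν E < ε

/-- `μ ⊥ ν`, singularity in the ε sense. -/
def Sing (𝒜 : Set (Set Ω)) (μ ν : Set Ω → ℝ) : Prop :=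
  ∀ ε > (0:ℝ), ∃ B ∈ 𝒜, tv 𝒜 μ Bᶜ + tv 𝒜 ν B < ε

/-- normalized total variation `|μ|/(1 ∨ ‖μ‖)`. -/
noncomputable def nvar (𝒜 : Set (Set Ω)) (μ : Set Ω → ℝ) (A : Set Ω) : ℝ :=
  tv 𝒜 μ A / (1 ⊔ tvNorm 𝒜 μ)

/-- membership in `𝐀(M)`: countable convex combinations of normalized variations. -/
def MemAM (𝒜 : Set (Set Ω)) (M : Set (Set Ω → ℝ)) (m : Set Ω → ℝ) : Prop :=
  ∃ (μ : ℕ → Set Ω → ℝ) (α : ℕ → ℝ),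
    (∀ n, μ n ∈ M) ∧ (∀ n, 0 ≤ α n) ∧ HasSum α 1 ∧
    ∀ A : Set Ω, m A = ∑' n, α n * nvar 𝒜 (μ n) A

/-- membership in `𝐋(M)`. -/
def MemLM (𝒜 : Set (Set Ω)) (M : Set (Set Ω → ℝ)) (ν : Set Ω → ℝ) : Prop :=
  ∃ m, MemAM 𝒜 M m ∧ AC 𝒜 ν m

/-- order on ba(𝒜). -/
def baLE (𝒜 : Set (Set Ω)) (μ ν : Set Ω → ℝ) : Prop := ∀ A ∈ 𝒜, μ A ≤ ν A

/-- λ-completion of 𝒜. -/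
def Completion (𝒜 : Set (Set Ω)) (l : Set Ω → ℝ) : Set (Set Ω) :=
  {B | ∀ ε > (0:ℝ), ∃ A ∈ 𝒜, ∃ A' ∈ 𝒜, A ⊆ B ∧ B ⊆ A' ∧ l (A' \ A) < ε}

/-- the extension `λ̄` to the completion. -/
noncomputable def extOf (𝒜 : Set (Set Ω)) (l : Set Ω → ℝ) (B : Set Ω) : ℝ :=
  sSup {x | ∃ A ∈ 𝒜, A ⊆ B ∧ x = l A}

/-- λ-atom. -/
def IsLAtom (𝒜 : Set (Set Ω)) (l : Set Ω → ℝ) (B : Set Ω) : Prop :=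
  B ∈ 𝒜 ∧ 0 < l B ∧ ∀ A ∈ 𝒜, A ⊆ B → l A = 0 ∨ l (B \ A) = 0

/-- simple 𝒜-measurable function. -/
def IsSimple (𝒜 : Set (Set Ω)) (f : Ω → ℝ) : Prop :=
  (Set.range f).Finite ∧ ∀ c : ℝ, f ⁻¹' {c} ∈ 𝒜

/-- integral of a simple function. -/
noncomputable def simpleInt (μ : Set Ω → ℝ) (f : Ω → ℝ) : ℝ :=
  ∑ᶠ c : ℝ, c * μ (f ⁻¹' {c})

/-- outer measure associated with l on 𝒜. -/
noncomputable def outerOf (𝒜 : Set (Set Ω)) (l : Set Ω → ℝ) (S : Set Ω) : ℝ :=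
  sInf {x | ∃ A ∈ 𝒜, S ⊆ A ∧ x = l A}

/-- Dunford–Schwartz approximating sequence for `f`. -/
def ApproxSeq (𝒜 : Set (Set Ω)) (l : Set Ω → ℝ) (f : Ω → ℝ) (g : ℕ → Ω → ℝ) : Prop :=
  (∀ n, IsSimple 𝒜 (g n)) ∧
  (∀ ε > (0:ℝ), ∃ N, ∀ p ≥ N, ∀ q ≥ N, simpleInt l (fun x => |g p x - g q x|) < ε) ∧
  (∀ ε > (0:ℝ), Tendsto (fun n => outerOf 𝒜 l {x | ε ≤ |g n x - f x|}) atTop (nhds 0))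

/-- membership in L¹(l). -/
def MemL1 (𝒜 : Set (Set Ω)) (l : Set Ω → ℝ) (f : Ω → ℝ) : Prop :=
  ∃ g, ApproxSeq 𝒜 l f g

/-- the Dunford–Schwartz integral. -/
noncomputable def dsInt (𝒜 : Set (Set Ω)) (l : Set Ω → ℝ) (f : Ω → ℝ) : ℝ :=
  sInf {I | ∃ g, ApproxSeq 𝒜 l f g ∧ Tendsto (fun n => simpleInt l (g n)) atTop (nhds I)}

/-- L¹ seminorm distance. -/
noncomputable def l1dist (𝒜 : Set (Set Ω)) (l : Set Ω → ℝ) (f h : Ω → ℝ) : ℝ :=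
  dsInt 𝒜 l (fun x => |f x - h x|)

/-- membership in the L¹(l)-closure of a set C of functions. -/
def InL1Closure (𝒜 : Set (Set Ω)) (l : Set Ω → ℝ) (C : Set (Ω → ℝ)) (f : Ω → ℝ) : Prop :=
  ∀ ε > (0:ℝ), ∃ h ∈ C, l1dist 𝒜 l f h < ε

/-- the set C = K − Sim(𝒜)₊. -/
def ConeDiff (𝒜 : Set (Set Ω)) (K : Set (Ω → ℝ)) : Set (Ω → ℝ) :=
  {f | ∃ k ∈ K, ∃ s : Ω → ℝ, IsSimple 𝒜 s ∧ (∀ x, 0 ≤ s x) ∧ f = k - s}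

namespace IsAlg

variable {𝒜 : Set (Set Ω)} {s t : Set Ω}

theorem union_mem (hA : IsAlg 𝒜) (hs : s ∈ 𝒜) (ht : t ∈ 𝒜) : s ∪ t ∈ 𝒜 :=
  hA.2.2.2 s hs t ht

theorem compl_mem (hA : IsAlg 𝒜) (hs : s ∈ 𝒜) : sᶜ ∈ 𝒜 := hA.2.2.1 s hs

theorem inter_mem (hA : IsAlg 𝒜) (hs : s ∈ 𝒜) (ht : t ∈ 𝒜) : s ∩ t ∈ 𝒜 := by
  simpa [compl_union] using hA.compl_mem (hA.union_mem (hA.compl_mem hs) (hA.compl_mem ht))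

theorem diff_mem (hA : IsAlg 𝒜) (hs : s ∈ 𝒜) (ht : t ∈ 𝒜) : s \ t ∈ 𝒜 :=
  hA.inter_mem hs (hA.compl_mem ht)

end IsAlg

namespace IsFinAdd

variable {𝒜 : Set (Set Ω)} {μ ν : Set Ω → ℝ} {s t : Set Ω}

theorem eq_add_diff (hA : IsAlg 𝒜) (hμ : IsFinAdd 𝒜 μ) (hs : s ∈ 𝒜) (ht : t ∈ 𝒜)
    (hts : t ⊆ s) : μ s = μ t + μ (s \ t) := by
  rw [← hμ.2.1 t ht _ (hA.diff_mem hs ht) disjoint_sdiff_right, union_sdiff_cancel hts]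

theorem neg (hμ : IsFinAdd 𝒜 μ) : IsFinAdd 𝒜 (-μ) := by
  obtain ⟨C, hC⟩ := hμ.2.2
  refine ⟨by simp [hμ.1], fun s hs t ht hst => ?_, C, fun s hs => by simpa using hC s hs⟩
  simp [hμ.2.1 s hs t ht hst, add_comm]

theorem add (hμ : IsFinAdd 𝒜 μ) (hν : IsFinAdd 𝒜 ν) : IsFinAdd 𝒜 (μ + ν) := by
  obtain ⟨C, hC⟩ := hμ.2.2
  obtain ⟨D, hD⟩ := hν.2.2
  refine ⟨by simp [hμ.1, hν.1], fun s hs t ht hst => ?_, C + D, fun s hs => ?_⟩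
  · simp only [Pi.add_apply, hμ.2.1 s hs t ht hst, hν.2.1 s hs t ht hst]
    ring
  · exact (abs_add_le _ _).trans (add_le_add (hC s hs) (hD s hs))

theorem sub (hμ : IsFinAdd 𝒜 μ) (hν : IsFinAdd 𝒜 ν) : IsFinAdd 𝒜 (μ - ν) := by
  simpa [sub_eq_add_neg] using hμ.add hν.neg

theorem div_const (hμ : IsFinAdd 𝒜 μ) (c : ℝ) : IsFinAdd 𝒜 (fun s => μ s / c) := by
  obtain ⟨C, hC⟩ := hμ.2.2
  refine ⟨by simp [hμ.1], fun s hs t ht hst => by simp [hμ.2.1 s hs t ht hst, add_div],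
    C / |c|, fun s hs => ?_⟩
  rw [abs_div]
  exact div_le_div_of_nonneg_right (hC s hs) (abs_nonneg c)

end IsFinAdd

section BaSup

variable {𝒜 : Set (Set Ω)} {g h ρ : Set Ω → ℝ} {s t : Set Ω}

/-- The supremum `g ∨ h` in the vector lattice ba(𝒜). -/
noncomputable def baSup (𝒜 : Set (Set Ω)) (g h : Set Ω → ℝ) (A : Set Ω) : ℝ :=
  sSup {x | ∃ B ∈ 𝒜, B ⊆ A ∧ x = g B + h (A \ B)}

theorem le_baSup (hA : IsAlg 𝒜) (hg : IsFinAdd 𝒜 g) (hh : IsFinAdd 𝒜 h) (hs : s ∈ 𝒜)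
    (ht : t ∈ 𝒜) (hts : t ⊆ s) : g t + h (s \ t) ≤ baSup 𝒜 g h s := by
  obtain ⟨C, hC⟩ := hg.2.2
  obtain ⟨D, hD⟩ := hh.2.2
  refine le_csSup ⟨C + D, ?_⟩ ⟨t, ht, hts, rfl⟩
  rintro _ ⟨B, hB, -, rfl⟩
  linarith [le_abs_self (g B), le_abs_self (h (s \ B)), hC B hB, hD _ (hA.diff_mem hs hB)]

theorem baSup_le (hA : IsAlg 𝒜) {c : ℝ} (hc : ∀ t ∈ 𝒜, t ⊆ s → g t + h (s \ t) ≤ c) :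
    baSup 𝒜 g h s ≤ c :=
  csSup_le ⟨_, ∅, hA.1, empty_subset s, rfl⟩ fun _ ⟨t, ht, hts, hx⟩ => hx ▸ hc t ht hts

theorem left_le_baSup (hA : IsAlg 𝒜) (hg : IsFinAdd 𝒜 g) (hh : IsFinAdd 𝒜 h) (hs : s ∈ 𝒜) :
    g s ≤ baSup 𝒜 g h s := by
  simpa [hh.1] using le_baSup hA hg hh hs hs subset_rfl

theorem right_le_baSup (hA : IsAlg 𝒜) (hg : IsFinAdd 𝒜 g) (hh : IsFinAdd 𝒜 h) (hs : s ∈ 𝒜) :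
    h s ≤ baSup 𝒜 g h s := by
  simpa [hg.1] using le_baSup hA hg hh hs hA.1 (empty_subset s)

theorem baSup_le_of_le (hA : IsAlg 𝒜) (hρ : IsFinAdd 𝒜 ρ) (hgρ : baLE 𝒜 g ρ)
    (hhρ : baLE 𝒜 h ρ) (hs : s ∈ 𝒜) : baSup 𝒜 g h s ≤ ρ s :=
  baSup_le hA fun t ht hts => by
    rw [hρ.eq_add_diff hA hs ht hts]
    exact add_le_add (hgρ t ht) (hhρ _ (hA.diff_mem hs ht))

theorem baSup_empty (hA : IsAlg 𝒜) (hg : IsFinAdd 𝒜 g) (hh : IsFinAdd 𝒜 h) :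
    baSup 𝒜 g h ∅ = 0 := by
  refine le_antisymm (baSup_le hA fun t _ ht => ?_) ?_
  · simp [subset_empty_iff.1 ht, hg.1, hh.1]
  · simpa [hg.1] using left_le_baSup hA hg hh hA.1

theorem baSup_union_le (hA : IsAlg 𝒜) (hg : IsFinAdd 𝒜 g) (hh : IsFinAdd 𝒜 h) (hs : s ∈ 𝒜)
    (ht : t ∈ 𝒜) (hst : Disjoint s t) :
    baSup 𝒜 g h (s ∪ t) ≤ baSup 𝒜 g h s + baSup 𝒜 g h t := by
  refine baSup_le hA fun C hC hCst => ?_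
  have hCs := hA.inter_mem hC hs
  have hCt := hA.inter_mem hC ht
  have hgC : g C = g (C ∩ s) + g (C ∩ t) := by
    rw [← hg.2.1 _ hCs _ hCt (hst.mono inter_subset_right inter_subset_right),
      ← inter_union_distrib_left, inter_eq_self_of_subset_left hCst]
  have hhC : h ((s ∪ t) \ C) = h (s \ (C ∩ s)) + h (t \ (C ∩ t)) := by
    rw [sdiff_inter_self_eq_sdiff, sdiff_inter_self_eq_sdiff, union_sdiff_distrib]
    exact hh.2.1 _ (hA.diff_mem hs hC) _ (hA.diff_mem ht hC) (hst.mono sdiff_subset sdiff_subset)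
  rw [hgC, hhC]
  linarith [le_baSup hA hg hh hs hCs inter_subset_right,
    le_baSup hA hg hh ht hCt inter_subset_right]

theorem le_baSup_union (hA : IsAlg 𝒜) (hg : IsFinAdd 𝒜 g) (hh : IsFinAdd 𝒜 h) (hs : s ∈ 𝒜)
    (ht : t ∈ 𝒜) (hst : Disjoint s t) :
    baSup 𝒜 g h s + baSup 𝒜 g h t ≤ baSup 𝒜 g h (s ∪ t) := by
  have key : ∀ C ∈ 𝒜, C ⊆ s → ∀ D ∈ 𝒜, D ⊆ t →
      (g C + h (s \ C)) + (g D + h (t \ D)) ≤ baSup 𝒜 g h (s ∪ t) := by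
    intro C hC hCs D hD hDt
    have hCD : Disjoint C D := hst.mono hCs hDt
    have hdiff : (s ∪ t) \ (C ∪ D) = s \ C ∪ t \ D := by
      ext x
      have := hst.notMem_of_mem_left (a := x)
      have := @hCs x
      have := @hDt x
      simp only [Set.mem_sdiff, mem_union]
      tauto
    have := le_baSup hA hg hh (hA.union_mem hs ht) (hA.union_mem hC hD) (union_subset_union hCs hDt)
    rw [hg.2.1 C hC D hD hCD, hdiff, hh.2.1 _ (hA.diff_mem hs hC) _ (hA.diff_mem ht hD)
      (hst.mono sdiff_subset sdiff_subset)] at this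
    linarith
  have step : ∀ C ∈ 𝒜, C ⊆ s → g C + h (s \ C) + baSup 𝒜 g h t ≤ baSup 𝒜 g h (s ∪ t) := by
    intro C hC hCs
    have := baSup_le hA (g := g) (h := h) (s := t)
      (c := baSup 𝒜 g h (s ∪ t) - (g C + h (s \ C))) fun D hD hDt => by
        linarith [key C hC hCs D hD hDt]
    linarith
  have := baSup_le hA (g := g) (h := h) (s := s) (c := baSup 𝒜 g h (s ∪ t) - baSup 𝒜 g h t)
    fun C hC hCs => by linarith [step C hC hCs]
  linarith

theorem IsFinAdd.baSup (hA : IsAlg 𝒜) (hg : IsFinAdd 𝒜 g) (hh : IsFinAdd 𝒜 h) :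
    IsFinAdd 𝒜 (baSup 𝒜 g h) := by
  obtain ⟨C, hC⟩ := hg.2.2
  obtain ⟨D, hD⟩ := hh.2.2
  refine ⟨baSup_empty hA hg hh, fun s hs t ht hst => le_antisymm
    (baSup_union_le hA hg hh hs ht hst) (le_baSup_union hA hg hh hs ht hst),
    C + D, fun s hs => abs_le.2 ⟨?_, baSup_le hA fun t ht _ => ?_⟩⟩
  · linarith [right_le_baSup hA hg hh hs, neg_abs_le (h s), hD s hs, abs_nonneg (g ∅), hC ∅ hA.1]
  · linarith [le_abs_self (g t), le_abs_self (h (s \ t)), hC t ht, hD _ (hA.diff_mem hs ht)]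

end BaSup

section TotalVariation

variable {𝒜 : Set (Set Ω)} {μ ν ρ : Set Ω → ℝ} {s t : Set Ω}

-- `tv 𝒜 μ` unfolds to `baSup 𝒜 μ (-μ)`: the variation `|μ|` is `μ ∨ -μ`.
theorem IsFinAdd.tv (hA : IsAlg 𝒜) (hμ : IsFinAdd 𝒜 μ) : IsFinAdd 𝒜 (tv 𝒜 μ) :=
  hμ.baSup hA hμ.neg

theorem tv_le (hA : IsAlg 𝒜) {c : ℝ} (hc : ∀ t ∈ 𝒜, t ⊆ s → μ t - μ (s \ t) ≤ c) :
    tv 𝒜 μ s ≤ c :=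
  show baSup 𝒜 μ (-μ) s ≤ c from baSup_le hA hc

theorem abs_le_tv (hA : IsAlg 𝒜) (hμ : IsFinAdd 𝒜 μ) (hs : s ∈ 𝒜) : |μ s| ≤ tv 𝒜 μ s :=
  abs_le'.2 ⟨left_le_baSup hA hμ hμ.neg hs, right_le_baSup hA hμ hμ.neg hs⟩

theorem tv_nonneg (hA : IsAlg 𝒜) (hμ : IsFinAdd 𝒜 μ) (hs : s ∈ 𝒜) : 0 ≤ tv 𝒜 μ s :=
  (abs_nonneg _).trans (abs_le_tv hA hμ hs)

theorem tv_mono (hA : IsAlg 𝒜) (hμ : IsFinAdd 𝒜 μ) (hs : s ∈ 𝒜) (ht : t ∈ 𝒜) (hts : t ⊆ s) :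
    tv 𝒜 μ t ≤ tv 𝒜 μ s := by
  rw [(hμ.tv hA).eq_add_diff hA hs ht hts]
  linarith [tv_nonneg hA hμ (hA.diff_mem hs ht)]

theorem tv_le_of_abs_le (hA : IsAlg 𝒜) (hρ : IsFinAdd 𝒜 ρ) (hs : s ∈ 𝒜)
    (hμρ : ∀ t ∈ 𝒜, |μ t| ≤ ρ t) : tv 𝒜 μ s ≤ ρ s :=
  tv_le hA fun t ht hts => by
    rw [hρ.eq_add_diff hA hs ht hts]
    linarith [le_abs_self (μ t), neg_abs_le (μ (s \ t)), hμρ t ht, hμρ _ (hA.diff_mem hs ht)]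

theorem tv_eq_self (hA : IsAlg 𝒜) (hμ : IsFinAdd 𝒜 μ) (hpos : IsPos 𝒜 μ) (hs : s ∈ 𝒜) :
    tv 𝒜 μ s = μ s :=
  le_antisymm (tv_le_of_abs_le hA hμ hs fun t ht => (abs_of_nonneg (hpos t ht)).le)
    ((le_abs_self _).trans (abs_le_tv hA hμ hs))

theorem tv_add_le (hA : IsAlg 𝒜) (hμ : IsFinAdd 𝒜 μ) (hν : IsFinAdd 𝒜 ν) (hs : s ∈ 𝒜) :
    tv 𝒜 (μ + ν) s ≤ tv 𝒜 μ s + tv 𝒜 ν s :=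
  tv_le_of_abs_le hA ((hμ.tv hA).add (hν.tv hA)) hs fun _ ht =>
    (abs_add_le _ _).trans (add_le_add (abs_le_tv hA hμ ht) (abs_le_tv hA hν ht))

theorem tv_baSup_le (hA : IsAlg 𝒜) (hμ : IsFinAdd 𝒜 μ) (hν : IsFinAdd 𝒜 ν) (hs : s ∈ 𝒜) :
    tv 𝒜 (baSup 𝒜 μ ν) s ≤ tv 𝒜 μ s + tv 𝒜 ν s := by
  have hρ := (hμ.tv hA).add (hν.tv hA)
  refine tv_le_of_abs_le hA hρ hs fun t ht => abs_le.2 ⟨?_, baSup_le_of_le hA hρ ?_ ?_ ht⟩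
  · simp only [Pi.add_apply]
    linarith [left_le_baSup hA hμ hν ht, neg_abs_le (μ t), abs_le_tv hA hμ ht, tv_nonneg hA hν ht]
  · intro u hu
    simp only [Pi.add_apply]
    linarith [le_abs_self (μ u), abs_le_tv hA hμ hu, tv_nonneg hA hν hu]
  · intro u hu
    simp only [Pi.add_apply]
    linarith [le_abs_self (ν u), abs_le_tv hA hν hu, tv_nonneg hA hμ hu]

theorem tv_le_tv_add_of_le (hA : IsAlg 𝒜) (hμ : IsFinAdd 𝒜 μ) (hν : IsFinAdd 𝒜 ν)
    (hμν : baLE 𝒜 μ ν) (hs : s ∈ 𝒜) : tv 𝒜 ν s ≤ tv 𝒜 μ s + (ν univ - μ univ) := by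
  have hd := hν.sub hμ
  have hpos : IsPos 𝒜 (ν - μ) := fun t ht => sub_nonneg.2 (hμν t ht)
  have hdu : (ν - μ) s ≤ (ν - μ) univ := by
    rw [hd.eq_add_diff hA hA.2.1 hs (subset_univ s)]
    linarith [hpos _ (hA.diff_mem hA.2.1 hs)]
  calc tv 𝒜 ν s = tv 𝒜 (μ + (ν - μ)) s := by rw [add_sub_cancel]
    _ ≤ tv 𝒜 μ s + tv 𝒜 (ν - μ) s := tv_add_le hA hμ hd hs
    _ ≤ tv 𝒜 μ s + (ν univ - μ univ) := by
      rw [tv_eq_self hA hd hpos hs]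
      exact add_le_add_right hdu _

end TotalVariation

section Mixture

variable {𝒜 : Set (Set Ω)} {M : Set (Set Ω → ℝ)} {μ m : Set Ω → ℝ} {s : Set Ω}

theorem IsFinAdd.nvar (hA : IsAlg 𝒜) (hμ : IsFinAdd 𝒜 μ) : IsFinAdd 𝒜 (nvar 𝒜 μ) :=
  (hμ.tv hA).div_const _

theorem nvar_nonneg (hA : IsAlg 𝒜) (hμ : IsFinAdd 𝒜 μ) (hs : s ∈ 𝒜) : 0 ≤ nvar 𝒜 μ s :=
  div_nonneg (tv_nonneg hA hμ hs) (zero_le_one.trans le_sup_left)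

theorem nvar_le_one (hA : IsAlg 𝒜) (hμ : IsFinAdd 𝒜 μ) (hs : s ∈ 𝒜) : nvar 𝒜 μ s ≤ 1 := by
  rw [nvar, div_le_one (zero_lt_one.trans_le le_sup_left)]
  exact (tv_mono hA hμ hA.2.1 hs (subset_univ s)).trans le_sup_right

theorem summable_mul_nvar (hA : IsAlg 𝒜) {μ : ℕ → Set Ω → ℝ} {α : ℕ → ℝ}
    (hμ : ∀ n, IsFinAdd 𝒜 (μ n)) (hα : ∀ n, 0 ≤ α n) (hα1 : Summable α) (hs : s ∈ 𝒜) :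
    Summable fun n => α n * nvar 𝒜 (μ n) s :=
  .of_nonneg_of_le (fun n => mul_nonneg (hα n) (nvar_nonneg hA (hμ n) hs))
    (fun n => mul_le_of_le_one_right (hα n) (nvar_le_one hA (hμ n) hs)) hα1

theorem MemAM.isPos (hA : IsAlg 𝒜) (hM : ∀ μ ∈ M, IsFinAdd 𝒜 μ) (hm : MemAM 𝒜 M m) :
    IsPos 𝒜 m := by
  obtain ⟨μ, α, hμM, hα, -, hmα⟩ := hm
  intro s hs
  rw [hmα]
  exact tsum_nonneg fun n => mul_nonneg (hα n) (nvar_nonneg hA (hM _ (hμM n)) hs)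

theorem MemAM.le_one (hA : IsAlg 𝒜) (hM : ∀ μ ∈ M, IsFinAdd 𝒜 μ) (hm : MemAM 𝒜 M m)
    (hs : s ∈ 𝒜) : m s ≤ 1 := by
  obtain ⟨μ, α, hμM, hα, hα1, hmα⟩ := hm
  have hμ n := hM _ (hμM n)
  rw [hmα, ← hα1.tsum_eq]
  exact Summable.tsum_le_tsum (fun n => mul_le_of_le_one_right (hα n) (nvar_le_one hA (hμ n) hs))
    (summable_mul_nvar hA hμ hα hα1.summable hs) hα1.summable

theorem MemAM.isFinAdd (hA : IsAlg 𝒜) (hM : ∀ μ ∈ M, IsFinAdd 𝒜 μ) (hm : MemAM 𝒜 M m) :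
    IsFinAdd 𝒜 m := by
  refine ⟨?_, fun s hs t ht hst => ?_, 1, fun s hs => ?_⟩
  · obtain ⟨μ, α, hμM, -, -, hmα⟩ := hm
    simp [hmα, ((hM _ (hμM _)).nvar hA).1]
  · obtain ⟨μ, α, hμM, hα, hα1, hmα⟩ := hm
    have hμ n := hM _ (hμM n)
    simp only [hmα, ((hμ _).nvar hA).2.1 s hs t ht hst, mul_add]
    exact (summable_mul_nvar hA hμ hα hα1.summable hs).tsum_add
      (summable_mul_nvar hA hμ hα hα1.summable ht)
  · rw [abs_of_nonneg (hm.isPos hA hM s hs)]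
    exact hm.le_one hA hM hs

theorem MemAM.tv_eq (hA : IsAlg 𝒜) (hM : ∀ μ ∈ M, IsFinAdd 𝒜 μ) (hm : MemAM 𝒜 M m)
    (hs : s ∈ 𝒜) : tv 𝒜 m s = m s :=
  tv_eq_self hA (hm.isFinAdd hA hM) (hm.isPos hA hM) hs

theorem hasSum_prod_of_nonneg {f : ℕ × ℕ → ℝ} {a : ℕ → ℝ} {c : ℝ} (hf : ∀ p, 0 ≤ f p)
    (hfa : ∀ j, HasSum (fun k => f (j, k)) (a j)) (ha : HasSum a c) : HasSum f c := by
  have hsum : Summable f := (summable_prod_of_nonneg fun p => hf p).2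
    ⟨fun j => (hfa j).summable, by simpa only [fun j => (hfa j).tsum_eq] using ha.summable⟩
  rw [ha.unique (hsum.hasSum.prod_fiberwise hfa)]
  exact hsum.hasSum

-- Off `𝒜` the series defining elements of `𝐀(M)` need not converge.
theorem exists_memAM_hasSum (hA : IsAlg 𝒜) (hM : ∀ μ ∈ M, IsFinAdd 𝒜 μ)
    {m : ℕ → Set Ω → ℝ} (hm : ∀ j, MemAM 𝒜 M (m j)) {β : ℕ → ℝ} (hβ : ∀ j, 0 ≤ β j)
    (hβ1 : HasSum β 1) :
    ∃ m', MemAM 𝒜 M m' ∧ ∀ s ∈ 𝒜, HasSum (fun j => β j * m j s) (m' s) := by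
  have hmpos j := (hm j).isPos hA hM
  have hmle j s (hs : s ∈ 𝒜) := (hm j).le_one hA hM hs
  choose μ α hμM hα hα1 hmα using hm
  have hμ j n := hM _ (hμM j n)
  let e : ℕ ≃ ℕ × ℕ := Nat.pairEquiv.symm
  let α' : ℕ × ℕ → ℝ := fun p => β p.1 * α p.1 p.2
  have hα' p : 0 ≤ α' p := mul_nonneg (hβ _) (hα _ _)
  have hα'1 : HasSum α' 1 :=
    hasSum_prod_of_nonneg hα' (fun j => by simpa using (hα1 j).mul_left (β j)) (by simpa using hβ1)
  refine ⟨fun s => ∑' k, α' (e k) * nvar 𝒜 (μ (e k).1 (e k).2) s,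
    ⟨fun k => μ (e k).1 (e k).2, α' ∘ e, fun k => hμM _ _, fun k => hα' _,
      e.hasSum_iff.2 hα'1, fun s => rfl⟩, fun s hs => ?_⟩
  have hmj j : HasSum (fun n => α j n * nvar 𝒜 (μ j n) s) (m j s) := by
    rw [hmα j]
    exact (summable_mul_nvar hA (hμ j) (hα j) (hα1 j).summable hs).hasSum
  have hβm : HasSum (fun j => β j * m j s) (∑' j, β j * m j s) :=
    (Summable.of_nonneg_of_le (fun j => mul_nonneg (hβ j) (hmpos j s hs))
      (fun j => mul_le_of_le_one_right (hβ j) (hmle j s hs)) hβ1.summable).hasSum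
  have hsum : HasSum (fun k => α' (e k) * nvar 𝒜 (μ (e k).1 (e k).2) s) (∑' j, β j * m j s) :=
    (e.hasSum_iff (f := fun p => α' p * nvar 𝒜 (μ p.1 p.2) s)).2 <| hasSum_prod_of_nonneg
      (fun p => mul_nonneg (hα' p) (nvar_nonneg hA (hμ _ _) hs))
      (fun j => by simpa only [α', mul_assoc] using (hmj j).mul_left (β j)) hβm
  beta_reduce
  rw [hsum.tsum_eq]
  exact hβm

end Mixture

section AbsoluteContinuity

variable {𝒜 : Set (Set Ω)} {M : Set (Set Ω → ℝ)} {ν ν₁ μ μ' m : Set Ω → ℝ}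

theorem AC.mono_left (hle : ∀ s ∈ 𝒜, tv 𝒜 ν₁ s ≤ tv 𝒜 ν s) (h : AC 𝒜 ν μ) : AC 𝒜 ν₁ μ :=
  fun ε hε => (h ε hε).imp fun _ ⟨hδ, hδν⟩ =>
    ⟨hδ, fun s hs hμs => (hle s hs).trans_lt (hδν s hs hμs)⟩

theorem AC.of_mul_tv_le (h : AC 𝒜 ν μ) {c : ℝ} (hc : 0 < c)
    (hμ : ∀ s ∈ 𝒜, c * tv 𝒜 μ s ≤ tv 𝒜 μ' s) : AC 𝒜 ν μ' := by
  intro ε hε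
  obtain ⟨δ, hδ, hδν⟩ := h ε hε
  exact ⟨c * δ, mul_pos hc hδ, fun s hs hμs =>
    hδν s hs (lt_of_mul_lt_mul_left ((hμ s hs).trans_lt hμs) hc.le)⟩

theorem exists_sum_tv_lt_of_forall_ac {ι : Type*} {F : ι → Set Ω → ℝ} {L : List ι}
    (h : ∀ i ∈ L, AC 𝒜 (F i) m) {ε : ℝ} (hε : 0 < ε) :
    ∃ δ > 0, ∀ s ∈ 𝒜, tv 𝒜 m s < δ → (L.map fun i => tv 𝒜 (F i) s).sum < ε := by
  induction L generalizing ε with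
  | nil => exact ⟨1, one_pos, fun _ _ _ => by simpa using hε⟩
  | cons i L ih =>
    obtain ⟨δ₁, hδ₁, h₁⟩ := h i List.mem_cons_self (ε / 2) (half_pos hε)
    obtain ⟨δ₂, hδ₂, h₂⟩ := ih (fun j hj => h j (List.mem_cons_of_mem i hj)) (half_pos hε)
    refine ⟨min δ₁ δ₂, lt_min hδ₁ hδ₂, fun s hs hms => ?_⟩
    rw [List.map_cons, List.sum_cons]
    linarith [h₁ s hs (hms.trans_le (min_le_left _ _)), h₂ s hs (hms.trans_le (min_le_right _ _))]

theorem AC.of_approx {ι : Type*} {F : ι → Set Ω → ℝ}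
    (h : ∀ ε > 0, ∃ L : List ι, (∀ i ∈ L, AC 𝒜 (F i) m) ∧
      ∀ s ∈ 𝒜, tv 𝒜 ν s ≤ (L.map fun i => tv 𝒜 (F i) s).sum + ε) :
    AC 𝒜 ν m := by
  intro ε hε
  obtain ⟨L, hLac, hL⟩ := h (ε / 2) (half_pos hε)
  obtain ⟨δ, hδ, hδL⟩ := exists_sum_tv_lt_of_forall_ac hLac (half_pos hε)
  exact ⟨δ, hδ, fun s hs hms => by linarith [hL s hs, hδL s hs hms]⟩

theorem exists_memAM_forall_ac (hA : IsAlg 𝒜) (hM : ∀ μ ∈ M, IsFinAdd 𝒜 μ)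
    {G : ℕ → Set Ω → ℝ} (hG : ∀ j, MemLM 𝒜 M (G j)) :
    ∃ m, MemAM 𝒜 M m ∧ ∀ j, AC 𝒜 (G j) m := by
  choose m hm hGm using hG
  obtain ⟨m', hm', hsum⟩ := exists_memAM_hasSum hA hM hm (β := fun j => 1 / 2 / 2 ^ j)
    (fun j => by positivity) (hasSum_geometric_two' 1)
  refine ⟨m', hm', fun j => (hGm j).of_mul_tv_le (c := 1 / 2 / 2 ^ j) (by positivity)
    fun s hs => ?_⟩
  rw [(hm j).tv_eq hA hM hs, hm'.tv_eq hA hM hs]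
  exact le_hasSum (hsum s hs) j fun k _ => mul_nonneg (by positivity) ((hm k).isPos hA hM s hs)

theorem memLM_of_approx {ι : Type*} [Nonempty ι] (hA : IsAlg 𝒜) (hM : ∀ μ ∈ M, IsFinAdd 𝒜 μ)
    {F : ι → Set Ω → ℝ} (hF : ∀ i, MemLM 𝒜 M (F i))
    (happrox : ∀ ε > 0, ∃ L : List ι, ∀ s ∈ 𝒜, tv 𝒜 ν s ≤ (L.map fun i => tv 𝒜 (F i) s).sum + ε) :
    MemLM 𝒜 M ν := by
  choose L hL using fun n : ℕ => happrox (1 / (n + 1)) (by positivity)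
  obtain ⟨i₀⟩ := ‹Nonempty ι›
  have hS : (insert i₀ (⋃ n, {i | i ∈ L n})).Countable :=
    (countable_iUnion fun n => (L n).finite_toSet.countable).insert i₀
  obtain ⟨e, he⟩ := hS.exists_eq_range (insert_nonempty _ _)
  obtain ⟨m, hm, hac⟩ := exists_memAM_forall_ac hA hM fun j => hF (e j)
  refine ⟨m, hm, AC.of_approx (F := F) fun ε hε => ?_⟩
  obtain ⟨n, hn⟩ := exists_nat_one_div_lt hε
  refine ⟨L n, fun i hi => ?_, fun s hs => (hL n s hs).trans (by linarith)⟩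
  obtain ⟨j, rfl⟩ : i ∈ range e := he ▸ mem_insert_of_mem _ (mem_iUnion.2 ⟨n, hi⟩)
  exact hac j

end AbsoluteContinuity

section Suprema

variable {𝒜 : Set (Set Ω)} {ι : Type*} {F : ι → Set Ω → ℝ} {ν ρ : Set Ω → ℝ}

theorem IsFinAdd.iSup {κ : Type*} [Nonempty κ] {G : κ → Set Ω → ℝ}
    (hG : ∀ k, IsFinAdd 𝒜 (G k))
    (hdir : ∀ k₁ k₂, ∃ k, baLE 𝒜 (G k₁) (G k) ∧ baLE 𝒜 (G k₂) (G k))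
    (hρ : IsFinAdd 𝒜 ρ) (hGρ : ∀ k, baLE 𝒜 (G k) ρ) :
    IsFinAdd 𝒜 (fun s => ⨆ k, G k s) := by
  have hbdd : ∀ s ∈ 𝒜, BddAbove (range fun k => G k s) := fun s hs =>
    ⟨ρ s, by rintro _ ⟨k, rfl⟩; exact hGρ k s hs⟩
  obtain ⟨k₀⟩ := ‹Nonempty κ›
  obtain ⟨C, hC⟩ := hρ.2.2
  obtain ⟨D, hD⟩ := (hG k₀).2.2
  refine ⟨by simp [fun k => (hG k).1], fun s hs t ht hst => ?_, C ⊔ D, fun s hs => ?_⟩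
  · simp only [fun k => (hG k).2.1 s hs t ht hst]
    refine le_antisymm (ciSup_le fun k => add_le_add (le_ciSup (hbdd s hs) k)
      (le_ciSup (hbdd t ht) k)) (ciSup_add_ciSup_le fun k₁ k₂ => ?_)
    obtain ⟨k, hk₁, hk₂⟩ := hdir k₁ k₂
    exact (add_le_add (hk₁ s hs) (hk₂ t ht)).trans
      (le_ciSup (f := fun k => G k s + G k t) ⟨ρ s + ρ t, by
        rintro _ ⟨k, rfl⟩; exact add_le_add (hGρ k s hs) (hGρ k t ht)⟩ k)
  · refine abs_le.2 ⟨?_, ciSup_le fun k => ?_⟩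
    · linarith [le_ciSup (hbdd s hs) k₀, neg_abs_le (G k₀ s), hD s hs,
        le_sup_right (a := C) (b := D)]
    · linarith [hGρ k s hs, le_abs_self (ρ s), hC s hs, le_sup_left (a := C) (b := D)]

noncomputable def listSup (𝒜 : Set (Set Ω)) (F : ι → Set Ω → ℝ) (i₀ : ι) :
    List ι → Set Ω → ℝ
  | [] => F i₀
  | i :: L => baSup 𝒜 (F i) (listSup 𝒜 F i₀ L)

theorem IsFinAdd.listSup (hA : IsAlg 𝒜) (hF : ∀ i, IsFinAdd 𝒜 (F i)) (i₀ : ι) :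
    ∀ L, IsFinAdd 𝒜 (listSup 𝒜 F i₀ L)
  | [] => hF i₀
  | i :: L => (hF i).baSup hA (IsFinAdd.listSup hA hF i₀ L)

theorem le_listSup (hA : IsAlg 𝒜) (hF : ∀ i, IsFinAdd 𝒜 (F i)) {i₀ : ι} :
    ∀ L, ∀ j ∈ i₀ :: L, baLE 𝒜 (F j) (listSup 𝒜 F i₀ L)
  | [], j, hj => by rw [List.mem_singleton.1 hj]; exact fun _ _ => le_rfl
  | i :: L, j, hj => fun s hs => by
    have hL := IsFinAdd.listSup hA hF i₀ L
    obtain rfl | hj : j = i ∨ j ∈ i₀ :: L := by simp only [List.mem_cons] at hj ⊢; tauto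
    · exact left_le_baSup hA (hF j) hL hs
    · exact (le_listSup hA hF L j hj s hs).trans (right_le_baSup hA (hF i) hL hs)

theorem listSup_le (hA : IsAlg 𝒜) (hF : ∀ i, IsFinAdd 𝒜 (F i)) (hρ : IsFinAdd 𝒜 ρ) {i₀ : ι} :
    ∀ L, (∀ j ∈ i₀ :: L, baLE 𝒜 (F j) ρ) → baLE 𝒜 (listSup 𝒜 F i₀ L) ρ
  | [], h => h i₀ List.mem_cons_self
  | i :: L, h => fun _ hs => baSup_le_of_le hA hρ (h i (by simp))
      (listSup_le hA hF hρ L fun j hj => h j (by simp only [List.mem_cons] at hj ⊢; tauto)) hs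

theorem listSup_le_listSup (hA : IsAlg 𝒜) (hF : ∀ i, IsFinAdd 𝒜 (F i)) {i₀ : ι} {L₁ L₂ : List ι}
    (h : L₁ ⊆ L₂) : baLE 𝒜 (listSup 𝒜 F i₀ L₁) (listSup 𝒜 F i₀ L₂) :=
  listSup_le hA hF (IsFinAdd.listSup hA hF i₀ L₂) L₁ fun j hj =>
    le_listSup hA hF L₂ j (List.cons_subset_cons i₀ h hj)

theorem tv_listSup_le (hA : IsAlg 𝒜) (hF : ∀ i, IsFinAdd 𝒜 (F i)) {i₀ : ι} {s : Set Ω}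
    (hs : s ∈ 𝒜) : ∀ L, tv 𝒜 (listSup 𝒜 F i₀ L) s ≤ ((i₀ :: L).map fun i => tv 𝒜 (F i) s).sum
  | [] => by simp [listSup]
  | i :: L => by
    have hi := tv_baSup_le hA (hF i) (IsFinAdd.listSup hA hF i₀ L) hs
    have hL := tv_listSup_le hA hF (i₀ := i₀) hs L
    simp only [listSup, List.map_cons, List.sum_cons] at hi hL ⊢
    linarith

theorem exists_list_tv_le_add [Nonempty ι] (hA : IsAlg 𝒜) (hF : ∀ i, IsFinAdd 𝒜 (F i))
    (hν : IsFinAdd 𝒜 ν) (hFν : ∀ i, baLE 𝒜 (F i) ν)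
    (hlub : ∀ ρ, IsFinAdd 𝒜 ρ → (∀ i, baLE 𝒜 (F i) ρ) → baLE 𝒜 ν ρ) {ε : ℝ} (hε : 0 < ε) :
    ∃ L : List ι, ∀ s ∈ 𝒜, tv 𝒜 ν s ≤ (L.map fun i => tv 𝒜 (F i) s).sum + ε := by
  obtain ⟨i₀⟩ := ‹Nonempty ι›
  have hG := IsFinAdd.listSup hA hF i₀
  have hGν L : baLE 𝒜 (listSup 𝒜 F i₀ L) ν := listSup_le hA hF hν L fun j _ => hFν j
  have hσ : IsFinAdd 𝒜 (fun s => ⨆ L, listSup 𝒜 F i₀ L s) :=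
    IsFinAdd.iSup hG (fun L₁ L₂ => ⟨L₁ ++ L₂,
      listSup_le_listSup hA hF (List.subset_append_left _ _),
      listSup_le_listSup hA hF (List.subset_append_right _ _)⟩) hν hGν
  have hFσ i : baLE 𝒜 (F i) (fun s => ⨆ L, listSup 𝒜 F i₀ L s) := fun s hs =>
    (le_listSup hA hF [i] i (by simp) s hs).trans
      (le_ciSup ⟨ν s, by rintro _ ⟨L, rfl⟩; exact hGν L s hs⟩ [i])
  obtain ⟨L, hL⟩ := exists_lt_of_lt_ciSup
    (show ν univ - ε < ⨆ L, listSup 𝒜 F i₀ L univ by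
      linarith [hlub _ hσ hFσ univ hA.2.1])
  refine ⟨i₀ :: L, fun s hs => ?_⟩
  linarith [tv_le_tv_add_of_le hA (hG L) hν (hGν L) hs, tv_listSup_le hA hF (i₀ := i₀) hs L]

end Suprema

theorem lm_is_band_general {Ω : Type*} (𝒜 : Set (Set Ω)) (hA : IsAlg 𝒜)
    (M : Set (Set Ω → ℝ)) (hM : ∀ μ ∈ M, IsFinAdd 𝒜 μ) :
    (∀ ν ν₁ : Set Ω → ℝ, IsFinAdd 𝒜 ν → IsFinAdd 𝒜 ν₁ →
      (∀ A ∈ 𝒜, tv 𝒜 ν₁ A ≤ tv 𝒜 ν A) → MemLM 𝒜 M ν → MemLM 𝒜 M ν₁) ∧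
    (∀ (ι : Type) (F : ι → Set Ω → ℝ), Nonempty ι →
      (∀ i, IsFinAdd 𝒜 (F i) ∧ MemLM 𝒜 M (F i)) →
      ∀ ν : Set Ω → ℝ, IsFinAdd 𝒜 ν →
        (∀ i, baLE 𝒜 (F i) ν) →
        (∀ ρ : Set Ω → ℝ, IsFinAdd 𝒜 ρ → (∀ i, baLE 𝒜 (F i) ρ) → baLE 𝒜 ν ρ) →
        MemLM 𝒜 M ν) := by
  constructor
  · rintro ν ν₁ - - hle ⟨m, hm, hνm⟩
    exact ⟨m, hm, hνm.mono_left hle⟩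
  · intro ι F hι hF ν hν hFν hlub
    exact memLM_of_approx hA hM (fun i => (hF i).2) fun ε hε =>
      exists_list_tv_le_add hA (fun i => (hF i).1) hν hFν hlub hε

/-- 𝐋(M) is a band (normal sublattice) of ba(𝒜): solid and closed
under existing suprema of arbitrary nonempty families. -/
theorem lm_is_band {Ω : Type*} [Nonempty Ω] (𝒜 : Set (Set Ω)) (hA : IsAlg 𝒜)
    (M : Set (Set Ω → ℝ)) (hM : ∀ μ ∈ M, IsFinAdd 𝒜 μ) :
    (∀ ν ν₁ : Set Ω → ℝ, IsFinAdd 𝒜 ν → IsFinAdd 𝒜 ν₁ →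
      (∀ A ∈ 𝒜, tv 𝒜 ν₁ A ≤ tv 𝒜 ν A) → MemLM 𝒜 M ν → MemLM 𝒜 M ν₁) ∧
    (∀ (ι : Type) (F : ι → Set Ω → ℝ), Nonempty ι →
      (∀ i, IsFinAdd 𝒜 (F i) ∧ MemLM 𝒜 M (F i)) →
      ∀ ν : Set Ω → ℝ, IsFinAdd 𝒜 ν →
        (∀ i, baLE 𝒜 (F i) ν) →
        (∀ ρ : Set Ω → ℝ, IsFinAdd 𝒜 ρ → (∀ i, baLE 𝒜 (F i) ρ) → baLE 𝒜 ν ρ) →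
        MemLM 𝒜 M ν) :=
  lm_is_band_general 𝒜 hA M hM
end

section
/- Let A be an algebra of subsets of Ω, λ ∈ ba(A)₊, and H ⊆ A. Define A_H = {A ∈ A : inf over finite subsets α ⊆ H of λ(A \ ⋃_{H∈α} H) = 0}. Then there exists a sequence H₁, H₂, ... ∈ H such that lim_{k→∞} sup_{A ∈ A_H} λ(A \ (H₁ ∪ ... ∪ H_k)) = 0. -/
open Set Filter Topology

variable {Ω : Type*}

/-!
Let `S` be the supremum of `λ(H₁ ∪ ⋯ ∪ Hₙ)` over finite families in `H`; it is finite because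
`λ` is bounded. If `U` is such a finite union with `λ(U) > S - ε`, then for every other finite
union `V` we get `λ(V \ U) = λ(V ∪ U) - λ(U) < ε`, and since each `A ∈ 𝒜_H` is within any
`δ > 0` of some `V`, also `λ(A \ U) < ε`. Choosing families whose unions have measure tending
to `S` and enumerating their countably many members in one sequence gives the `Hₖ`.
-/

namespace IsAlg

variable {𝒜 : Set (Set Ω)}

theorem compl_mem_s4 (hA : IsAlg 𝒜) {A : Set Ω} (ha : A ∈ 𝒜) : Aᶜ ∈ 𝒜 := hA.2.2.1 A ha

theorem union_mem_s4 (hA : IsAlg 𝒜) {A B : Set Ω} (ha : A ∈ 𝒜) (hb : B ∈ 𝒜) : A ∪ B ∈ 𝒜 :=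
  hA.2.2.2 A ha B hb

theorem diff_mem_s4 (hA : IsAlg 𝒜) {A B : Set Ω} (ha : A ∈ 𝒜) (hb : B ∈ 𝒜) : A \ B ∈ 𝒜 := by
  simpa [Set.sdiff_eq, Set.compl_union] using hA.compl_mem_s4 (hA.union_mem_s4 (hA.compl_mem_s4 ha) hb)

theorem sUnion_mem (hA : IsAlg 𝒜) {s : Finset (Set Ω)} (hs : ↑s ⊆ 𝒜) : ⋃₀ ↑s ∈ 𝒜 := by
  induction s using Finset.induction_on with
  | empty => simpa using hA.1
  | insert B t _ ih =>
    rw [Finset.coe_insert, Set.insert_subset_iff] at hs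
    rw [Finset.coe_insert, Set.sUnion_insert]
    exact hA.union_mem_s4 hs.1 (ih hs.2)

end IsAlg

namespace IsFinAdd

variable {𝒜 : Set (Set Ω)} {l : Set Ω → ℝ}

theorem measure_union_sdiff (hA : IsAlg 𝒜) (hl : IsFinAdd 𝒜 l) {A B : Set Ω} (ha : A ∈ 𝒜)
    (hb : B ∈ 𝒜) : l (A ∪ B) = l A + l (B \ A) := by
  rw [← Set.union_sdiff_self]
  exact hl.2.1 A ha _ (hA.diff_mem_s4 hb ha) disjoint_sdiff_self_right

theorem mono (hA : IsAlg 𝒜) (hl : IsFinAdd 𝒜 l) (hpos : IsPos 𝒜 l) {A B : Set Ω} (ha : A ∈ 𝒜)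
    (hb : B ∈ 𝒜) (hAB : A ⊆ B) : l A ≤ l B := by
  have h := hl.measure_union_sdiff hA ha hb
  rw [Set.union_eq_self_of_subset_left hAB] at h
  linarith [hpos _ (hA.diff_mem_s4 hb ha)]

theorem measure_union_le (hA : IsAlg 𝒜) (hl : IsFinAdd 𝒜 l) (hpos : IsPos 𝒜 l) {A B : Set Ω}
    (ha : A ∈ 𝒜) (hb : B ∈ 𝒜) : l (A ∪ B) ≤ l A + l B := by
  rw [hl.measure_union_sdiff hA ha hb]
  linarith [hl.mono hA hpos (hA.diff_mem_s4 hb ha) hb Set.sdiff_subset]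

theorem measure_sdiff_le (hA : IsAlg 𝒜) (hl : IsFinAdd 𝒜 l) (hpos : IsPos 𝒜 l) {A B C : Set Ω}
    (ha : A ∈ 𝒜) (hb : B ∈ 𝒜) (hc : C ∈ 𝒜) : l (A \ C) ≤ l (A \ B) + l (B \ C) := by
  calc l (A \ C) ≤ l (A \ B ∪ B \ C) :=
        hl.mono hA hpos (hA.diff_mem_s4 ha hc) (hA.union_mem_s4 (hA.diff_mem_s4 ha hb) (hA.diff_mem_s4 hb hc))
          fun x hx => by by_cases h : x ∈ B <;> simp_all
    _ ≤ l (A \ B) + l (B \ C) :=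
        hl.measure_union_le hA hpos (hA.diff_mem_s4 ha hb) (hA.diff_mem_s4 hb hc)

end IsFinAdd

noncomputable def finUnionSup (l : Set Ω → ℝ) (H : Set (Set Ω)) : ℝ :=
  sSup {x | ∃ s : Finset (Set Ω), ↑s ⊆ H ∧ l (⋃₀ ↑s) = x}

section finUnionSup

variable {𝒜 : Set (Set Ω)} {l : Set Ω → ℝ} {H : Set (Set Ω)}

theorem bddAbove_finUnions (hA : IsAlg 𝒜) (hl : IsFinAdd 𝒜 l) (hH : H ⊆ 𝒜) :
    BddAbove {x | ∃ s : Finset (Set Ω), ↑s ⊆ H ∧ l (⋃₀ ↑s) = x} := by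
  obtain ⟨C, hC⟩ := hl.2.2
  refine ⟨C, ?_⟩
  rintro _ ⟨s, hs, rfl⟩
  exact (le_abs_self _).trans (hC _ (hA.sUnion_mem (hs.trans hH)))

theorem le_finUnionSup (hA : IsAlg 𝒜) (hl : IsFinAdd 𝒜 l) (hH : H ⊆ 𝒜) {s : Finset (Set Ω)}
    (hs : ↑s ⊆ H) : l (⋃₀ ↑s) ≤ finUnionSup l H :=
  le_csSup (bddAbove_finUnions hA hl hH) ⟨s, hs, rfl⟩

theorem exists_lt_finUnionSup {ε : ℝ} (hε : 0 < ε) :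
    ∃ s : Finset (Set Ω), ↑s ⊆ H ∧ finUnionSup l H - ε < l (⋃₀ ↑s) := by
  have hne : {x | ∃ s : Finset (Set Ω), ↑s ⊆ H ∧ l (⋃₀ ↑s) = x}.Nonempty := ⟨_, ∅, by simp, rfl⟩
  obtain ⟨_, ⟨s, hs, rfl⟩, h⟩ := exists_lt_of_lt_csSup hne (sub_lt_self _ hε)
  exact ⟨s, hs, h⟩

theorem measure_sdiff_sUnion_le (hA : IsAlg 𝒜) (hl : IsFinAdd 𝒜 l) (hpos : IsPos 𝒜 l)
    (hH : H ⊆ 𝒜) {A : Set Ω} (ha : A ∈ 𝒜)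
    (hAH : ∀ δ > (0:ℝ), ∃ s : Finset (Set Ω), ↑s ⊆ H ∧ l (A \ ⋃₀ ↑s) < δ)
    {t : Finset (Set Ω)} (ht : ↑t ⊆ H) : l (A \ ⋃₀ ↑t) ≤ finUnionSup l H - l (⋃₀ ↑t) := by
  have htA := hA.sUnion_mem (ht.trans hH)
  refine le_of_forall_pos_lt_add fun δ hδ => ?_
  obtain ⟨s, hs, hsδ⟩ := hAH δ hδ
  have hsA := hA.sUnion_mem (hs.trans hH)
  have hst : l (⋃₀ ↑s \ ⋃₀ ↑t) ≤ finUnionSup l H - l (⋃₀ ↑t) := by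
    have hsup := le_finUnionSup hA hl hH (s := t ∪ s)
      (by rw [Finset.coe_union]; exact Set.union_subset ht hs)
    rw [Finset.coe_union, Set.sUnion_union, hl.measure_union_sdiff hA htA hsA] at hsup
    linarith
  linarith [hl.measure_sdiff_le hA hpos ha hsA htA]

end finUnionSup

theorem exists_seq_finset_subset_image_range {α : Type*} {H : Set α} (hne : H.Nonempty)
    (s : ℕ → Finset α) (hs : ∀ k, ↑(s k) ⊆ H) :
    ∃ f : ℕ → α, (∀ n, f n ∈ H) ∧ ∀ j, ∃ k, ↑(s j) ⊆ f '' ↑(Finset.range (k + 1)) := by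
  obtain ⟨a, ha⟩ := hne
  obtain ⟨f, hf⟩ := ((Set.countable_singleton a).union
    (Set.countable_iUnion fun k => (s k).countable_toSet)).exists_eq_range
    (Set.singleton_nonempty a).inl
  have hfH : ∀ n, f n ∈ H := by
    intro n
    have hn : f n ∈ ({a} ∪ ⋃ k, ↑(s k) : Set α) := hf ▸ Set.mem_range_self n
    simp only [Set.mem_union, Set.mem_singleton_iff, Set.mem_iUnion] at hn
    rcases hn with rfl | ⟨k, hk⟩
    exacts [ha, hs k hk]
  refine ⟨f, hfH, fun j => ?_⟩
  have hdir : Directed (· ⊆ ·) fun k => f '' ↑(Finset.range (k + 1)) :=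
    Monotone.directed_le fun i k hik => Set.image_mono (by simpa using hik)
  refine hdir.exists_mem_subset_of_finset_subset_biUnion fun x hx => ?_
  obtain ⟨n, rfl⟩ : x ∈ Set.range f := hf ▸ Set.mem_union_right _ (Set.mem_iUnion_of_mem j hx)
  exact Set.mem_iUnion_of_mem n ⟨n, by simp, rfl⟩

theorem exists_seq_approx_finUnionSup {𝒜 : Set (Set Ω)} {l : Set Ω → ℝ} {H : Set (Set Ω)}
    (hA : IsAlg 𝒜) (hl : IsFinAdd 𝒜 l) (hpos : IsPos 𝒜 l) (hH : H ⊆ 𝒜) (hne : H.Nonempty) :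
    ∃ Hseq : ℕ → Set Ω, (∀ n, Hseq n ∈ H) ∧ ∀ ε > (0:ℝ), ∃ k : ℕ,
      finUnionSup l H - ε < l (⋃₀ ↑((Finset.range (k + 1)).image Hseq)) := by
  choose s hsH hs using fun k : ℕ =>
    exists_lt_finUnionSup (l := l) (H := H) (Nat.one_div_pos_of_nat (n := k))
  obtain ⟨Hseq, hHseq, hcover⟩ := exists_seq_finset_subset_image_range hne s hsH
  refine ⟨Hseq, hHseq, fun ε hε => ?_⟩
  obtain ⟨j, hj⟩ := exists_nat_one_div_lt hε
  obtain ⟨k, hk⟩ := hcover j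
  have himH : ↑((Finset.range (k + 1)).image Hseq) ⊆ H :=
    Finset.coe_image_subset_range.trans (Set.range_subset_iff.2 hHseq)
  refine ⟨k, ?_⟩
  calc finUnionSup l H - ε < finUnionSup l H - 1 / (j + 1) := by linarith
    _ < l (⋃₀ ↑(s j)) := hs j
    _ ≤ l (⋃₀ ↑((Finset.range (k + 1)).image Hseq)) :=
      hl.mono hA hpos (hA.sUnion_mem ((hsH j).trans hH)) (hA.sUnion_mem (himH.trans hH))
        (Set.sUnion_mono (by rwa [Finset.coe_image]))

/-- Corollary on 𝒜_ℋ: there is a sequence in ℋ such that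
lim_k sup_{A ∈ 𝒜_ℋ} λ(A \ (H₁ ∪ ⋯ ∪ H_k)) = 0. -/
theorem drewnowski {Ω : Type*} (𝒜 : Set (Set Ω)) (hA : IsAlg 𝒜)
    (l : Set Ω → ℝ) (hl : IsFinAdd 𝒜 l) (hpos : IsPos 𝒜 l)
    (H : Set (Set Ω)) (hH : H ⊆ 𝒜) (hne : H.Nonempty) :
    ∃ Hseq : ℕ → Set Ω, (∀ n, Hseq n ∈ H) ∧
      ∀ ε > (0:ℝ), ∃ k : ℕ, ∀ A ∈ 𝒜,
        (∀ δ > (0:ℝ), ∃ s : Finset (Set Ω), ↑s ⊆ H ∧ l (A \ ⋃₀ ↑s) < δ) →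
        l (A \ ⋃ n ∈ Finset.range (k+1), Hseq n) < ε := by
  obtain ⟨Hseq, hHseq, hsup⟩ := exists_seq_approx_finUnionSup hA hl hpos hH hne
  refine ⟨Hseq, hHseq, fun ε hε => ?_⟩
  obtain ⟨k, hk⟩ := hsup ε hε
  refine ⟨k, fun A ha hAH => ?_⟩
  have himH : ↑((Finset.range (k + 1)).image Hseq) ⊆ H :=
    Finset.coe_image_subset_range.trans (Set.range_subset_iff.2 hHseq)
  have hU : ⋃ n ∈ Finset.range (k + 1), Hseq n = ⋃₀ ↑((Finset.range (k + 1)).image Hseq) := by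
    rw [Finset.coe_image, Set.sUnion_image, Finset.set_biUnion_coe]
  rw [hU]
  linarith [measure_sdiff_sUnion_le hA hl hpos hH ha hAH himH]
end

section
/- Let A be an algebra over Ω and let λ ∈ ba(A)₊. If φ is a positive continuous linear functional on L¹(λ), then there exists μ ∈ ba(A)₊ with μ absolutely continuous with respect to λ such that φ(f) = ∫ f dμ for all f ∈ L¹(λ), and moreover sup{μ(B)/λ(B) : B ∈ A, λ(B) > 0} ≤ ‖φ‖. -/
open Set Filter Topology

variable {Ω : Type*}

/-! Put `μ B = φ 1_B`. Linearity of `φ` makes `μ` finitely additive and gives `φ s = ∫ s dμ` for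
simple `s`; continuity gives `μ ≤ K λ`, so a `λ`-approximating sequence `gₙ` of `f` is also
`μ`-approximating, and `φ f = lim φ gₙ = lim ∫ gₙ dμ = ∫ f dμ`. Testing `φ` on `1_B / λ B` bounds
`μ B / λ B` by `‖φ‖`.

The substance is that the Dunford–Schwartz integral is well defined: two approximating sequences
of the same function are asymptotically close in mean. Off a set of small outer measure they are
uniformly close, and on a set of small measure both have small integral, because the integrals of
an `L¹`-Cauchy sequence of simple functions are uniformly absolutely continuous. -/

section

variable {𝒜 : Set (Set Ω)}

namespace IsAlg

variable (hA : IsAlg 𝒜) {A B : Set Ω}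
include hA

theorem empty_mem : (∅ : Set Ω) ∈ 𝒜 := hA.1

theorem univ_mem : (univ : Set Ω) ∈ 𝒜 := hA.2.1

theorem compl_mem_s15 (h : A ∈ 𝒜) : Aᶜ ∈ 𝒜 := hA.2.2.1 A h

theorem union_mem_s15 (hA' : A ∈ 𝒜) (hB : B ∈ 𝒜) : A ∪ B ∈ 𝒜 := hA.2.2.2 A hA' B hB

theorem inter_mem_s15 (hA' : A ∈ 𝒜) (hB : B ∈ 𝒜) : A ∩ B ∈ 𝒜 := by
  simpa using hA.compl_mem_s15 (hA.union_mem_s15 (hA.compl_mem_s15 hA') (hA.compl_mem_s15 hB))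

theorem diff_mem_s15 (hA' : A ∈ 𝒜) (hB : B ∈ 𝒜) : A \ B ∈ 𝒜 :=
  hA.inter_mem_s15 hA' (hA.compl_mem_s15 hB)

theorem biUnion_mem {ι : Type*} {s : Finset ι} {C : ι → Set Ω} (hC : ∀ i ∈ s, C i ∈ 𝒜) :
    (⋃ i ∈ s, C i) ∈ 𝒜 := by
  classical
  induction s using Finset.induction_on with
  | empty => simpa using hA.empty_mem
  | insert a s _ ih =>
    rw [Finset.set_biUnion_insert]
    exact hA.union_mem_s15 (hC a (by simp)) (ih fun i hi => hC i (by simp [hi]))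

end IsAlg

namespace IsSimple

variable (hA : IsAlg 𝒜)
include hA

theorem const (c : ℝ) : IsSimple 𝒜 (fun _ : Ω => c) := by
  refine ⟨(finite_singleton c).subset (range_const_subset), fun d => ?_⟩
  by_cases h : c = d
  · simpa [h] using hA.univ_mem
  · simpa [h] using hA.empty_mem

theorem indicator_one {B : Set Ω} (hB : B ∈ 𝒜) : IsSimple 𝒜 (B.indicator 1) := by
  refine ⟨(finite_singleton (1 : ℝ)).insert 0 |>.subset (by
    rintro _ ⟨x, rfl⟩; by_cases hx : x ∈ B <;> simp [hx]), fun c => ?_⟩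
  rcases Set.indicator_one_preimage B {c} with h | h | h | h <;> rw [h]
  exacts [hA.univ_mem, hB, hA.compl_mem_s15 hB, hA.empty_mem]

variable {a b : Ω → ℝ}

theorem comp (ha : IsSimple 𝒜 a) (u : ℝ → ℝ) : IsSimple 𝒜 (fun x => u (a x)) := by
  classical
  refine ⟨(ha.1.image u).subset (by rintro _ ⟨x, rfl⟩; exact ⟨a x, ⟨x, rfl⟩, rfl⟩), fun c => ?_⟩
  have : (fun x => u (a x)) ⁻¹' {c} = ⋃ v ∈ ha.1.toFinset.filter (u · = c), a ⁻¹' {v} := by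
    ext x; simp
  rw [this]
  exact hA.biUnion_mem fun v _ => ha.2 v

theorem comp₂ (ha : IsSimple 𝒜 a) (hb : IsSimple 𝒜 b) (u : ℝ → ℝ → ℝ) :
    IsSimple 𝒜 (fun x => u (a x) (b x)) := by
  classical
  refine ⟨((ha.1.prod hb.1).image fun p => u p.1 p.2).subset ?_, fun c => ?_⟩
  · rintro _ ⟨x, rfl⟩; exact ⟨(a x, b x), ⟨⟨x, rfl⟩, ⟨x, rfl⟩⟩, rfl⟩
  have : (fun x => u (a x) (b x)) ⁻¹' {c} =
      ⋃ p ∈ (ha.1.toFinset ×ˢ hb.1.toFinset).filter (fun p => u p.1 p.2 = c),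
        a ⁻¹' {p.1} ∩ b ⁻¹' {p.2} := by
    ext x; simp only [mem_preimage, mem_singleton_iff, mem_iUnion, Finset.mem_filter,
      Finset.mem_product, Finite.mem_toFinset, mem_range, mem_inter_iff]
    exact ⟨fun h => ⟨(a x, b x), ⟨⟨⟨x, rfl⟩, ⟨x, rfl⟩⟩, h⟩, rfl, rfl⟩,
      fun ⟨_, ⟨_, h⟩, h1, h2⟩ => h1 ▸ h2 ▸ h⟩
  rw [this]
  exact hA.biUnion_mem fun p _ => hA.inter_mem_s15 (ha.2 p.1) (hb.2 p.2)

theorem add (ha : IsSimple 𝒜 a) (hb : IsSimple 𝒜 b) : IsSimple 𝒜 (a + b) :=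
  ha.comp₂ hA hb (· + ·)

theorem sub (ha : IsSimple 𝒜 a) (hb : IsSimple 𝒜 b) : IsSimple 𝒜 (a - b) :=
  ha.comp₂ hA hb (· - ·)

theorem abs (ha : IsSimple 𝒜 a) : IsSimple 𝒜 (fun x => |a x|) := ha.comp hA _

theorem smul (ha : IsSimple 𝒜 a) (c : ℝ) : IsSimple 𝒜 (c • a) := ha.comp hA (c * ·)

theorem indicator (ha : IsSimple 𝒜 a) {B : Set Ω} (hB : B ∈ 𝒜) : IsSimple 𝒜 (B.indicator a) := by
  have : B.indicator a = fun x => B.indicator 1 x * a x := by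
    ext x; by_cases hx : x ∈ B <;> simp [hx]
  exact this ▸ (indicator_one hA hB).comp₂ hA ha (· * ·)

end IsSimple

variable {m : Set Ω → ℝ}

theorem IsFinAdd.biUnion_finset (hA : IsAlg 𝒜) (hm : IsFinAdd 𝒜 m) {ι : Type*} {s : Finset ι}
    {C : ι → Set Ω} (hC : ∀ i ∈ s, C i ∈ 𝒜) (hdisj : (s : Set ι).PairwiseDisjoint C) :
    m (⋃ i ∈ s, C i) = ∑ i ∈ s, m (C i) := by
  classical
  induction s using Finset.induction_on with
  | empty => simpa using hm.1
  | insert a s has ih =>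
    have hdisj_a : Disjoint (C a) (⋃ i ∈ s, C i) :=
      disjoint_iUnion₂_right.2 fun i hi =>
        hdisj (by simp) (by simp [hi]) (by rintro rfl; exact has hi)
    rw [Finset.set_biUnion_insert, Finset.sum_insert has,
      hm.2.1 _ (hC a (by simp)) _ (hA.biUnion_mem fun i hi => hC i (by simp [hi])) hdisj_a,
      ih (fun i hi => hC i (by simp [hi])) (hdisj.subset (by simp))]

theorem simpleInt_eq_sum (hm0 : m ∅ = 0) {a : Ω → ℝ} {s : Finset ℝ} (hs : range a ⊆ s) :
    simpleInt m a = ∑ c ∈ s, c * m (a ⁻¹' {c}) := by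
  refine finsum_eq_sum_of_support_subset _ fun c hc => ?_
  by_contra hcs
  rw [Function.mem_support, preimage_singleton_eq_empty.2 (fun h => hcs (hs h)), hm0,
    mul_zero] at hc
  exact hc rfl

theorem simpleInt_eq_sum_of_partition (hA : IsAlg 𝒜) (hm : IsFinAdd 𝒜 m) {ι : Type*}
    {s : Finset ι} {C : ι → Set Ω} (hC : ∀ i ∈ s, C i ∈ 𝒜)
    (hdisj : (s : Set ι).PairwiseDisjoint C) (hcover : ∀ x, ∃ i ∈ s, x ∈ C i)
    {a : Ω → ℝ} {v : ι → ℝ} (hav : ∀ i ∈ s, ∀ x ∈ C i, a x = v i) :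
    simpleInt m a = ∑ i ∈ s, v i * m (C i) := by
  classical
  have hrange : range a ⊆ s.image v := by
    rintro _ ⟨x, rfl⟩
    obtain ⟨i, hi, hx⟩ := hcover x
    exact Finset.mem_image.2 ⟨i, hi, (hav i hi x hx).symm⟩
  have hlevel : ∀ c, a ⁻¹' {c} = ⋃ i ∈ s.filter (v · = c), C i := by
    intro c; ext x
    simp only [mem_preimage, mem_singleton_iff, mem_iUnion, Finset.mem_filter, exists_prop]
    constructor
    · rintro rfl
      obtain ⟨i, hi, hx⟩ := hcover x
      exact ⟨i, ⟨hi, (hav i hi x hx).symm⟩, hx⟩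
    · rintro ⟨i, ⟨hi, rfl⟩, hx⟩
      exact hav i hi x hx
  rw [simpleInt_eq_sum hm.1 hrange,
    ← Finset.sum_fiberwise_of_maps_to (g := v) fun i hi => Finset.mem_image_of_mem v hi]
  refine Finset.sum_congr rfl fun c _ => ?_
  rw [hlevel, hm.biUnion_finset hA (fun i hi => hC i (Finset.mem_filter.1 hi).1)
    (hdisj.subset fun i hi => (Finset.mem_filter.1 hi).1), Finset.mul_sum]
  exact Finset.sum_congr rfl fun i hi => by rw [(Finset.mem_filter.1 hi).2]

theorem simpleInt_indicator_one (hm0 : m ∅ = 0) (B : Set Ω) :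
    simpleInt m (B.indicator 1) = m B := by
  rw [simpleInt_eq_sum hm0 (s := {0, 1}) (by
    rintro _ ⟨x, rfl⟩; by_cases hx : x ∈ B <;> simp [hx])]
  have : B.indicator 1 ⁻¹' {(1 : ℝ)} = B := by ext x; by_cases hx : x ∈ B <;> simp [hx]
  simp [this]

theorem simpleInt_const (hm0 : m ∅ = 0) (c : ℝ) : simpleInt m (fun _ : Ω => c) = c * m univ := by
  rw [simpleInt_eq_sum hm0 (s := {c}) (by simp), Finset.sum_singleton,
    preimage_const_of_mem (mem_singleton c)]

section SimpleIntegral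

variable (hA : IsAlg 𝒜) (hm : IsFinAdd 𝒜 m) {a b : Ω → ℝ}
include hA hm

theorem simpleInt_comp (ha : IsSimple 𝒜 a) (u : ℝ → ℝ) :
    simpleInt m (fun x => u (a x)) = ∑ c ∈ ha.1.toFinset, u c * m (a ⁻¹' {c}) := by
  refine simpleInt_eq_sum_of_partition hA hm (fun c _ => ha.2 c) ?_ ?_ ?_
  · exact fun c _ d _ hcd => disjoint_left.2 fun x hc hd => hcd (hc.symm.trans hd)
  · exact fun x => ⟨a x, by simp, rfl⟩
  · intro c _ x hx; rw [mem_preimage.1 hx]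

theorem simpleInt_comp₂ (ha : IsSimple 𝒜 a) (hb : IsSimple 𝒜 b) (u : ℝ → ℝ → ℝ) :
    simpleInt m (fun x => u (a x) (b x)) =
      ∑ p ∈ ha.1.toFinset ×ˢ hb.1.toFinset, u p.1 p.2 * m (a ⁻¹' {p.1} ∩ b ⁻¹' {p.2}) := by
  refine simpleInt_eq_sum_of_partition hA hm (fun p _ => hA.inter_mem_s15 (ha.2 p.1) (hb.2 p.2))
    ?_ ?_ ?_
  · intro p _ q _ hpq
    refine disjoint_left.2 fun x ⟨hp1, hp2⟩ ⟨hq1, hq2⟩ => hpq ?_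
    exact Prod.ext (hp1.symm.trans hq1) (hp2.symm.trans hq2)
  · exact fun x => ⟨(a x, b x), by simp, rfl, rfl⟩
  · rintro p _ x ⟨h1, h2⟩; rw [mem_preimage.1 h1, mem_preimage.1 h2]

theorem simpleInt_add (ha : IsSimple 𝒜 a) (hb : IsSimple 𝒜 b) :
    simpleInt m (a + b) = simpleInt m a + simpleInt m b := by
  have h := simpleInt_comp₂ hA hm ha hb
  rw [show a + b = fun x => a x + b x from rfl, h, show simpleInt m a = _ from h fun s _ => s,
    show simpleInt m b = _ from h fun _ t => t, ← Finset.sum_add_distrib]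
  simp only [add_mul]

theorem simpleInt_smul (ha : IsSimple 𝒜 a) (c : ℝ) :
    simpleInt m (c • a) = c * simpleInt m a := by
  have h := simpleInt_comp hA hm ha
  rw [show c • a = fun x => c * a x from rfl, h, show simpleInt m a = _ from h id,
    Finset.mul_sum]
  simp only [id, mul_assoc]

theorem simpleInt_sub (ha : IsSimple 𝒜 a) (hb : IsSimple 𝒜 b) :
    simpleInt m (a - b) = simpleInt m a - simpleInt m b := by
  rw [eq_sub_iff_add_eq, ← simpleInt_add hA hm (ha.sub hA hb) hb, sub_add_cancel]

end SimpleIntegral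

theorem simpleInt_nonneg (hm0 : m ∅ = 0) (hmp : IsPos 𝒜 m) {a : Ω → ℝ} (ha : IsSimple 𝒜 a)
    (h : 0 ≤ a) : 0 ≤ simpleInt m a := by
  rw [simpleInt_eq_sum hm0 (s := ha.1.toFinset) (by simp)]
  refine Finset.sum_nonneg fun c hc => ?_
  obtain ⟨x, rfl⟩ := ha.1.mem_toFinset.1 hc
  exact mul_nonneg (h x) (hmp _ (ha.2 _))

theorem simpleInt_le_mul_of_le_mul {μ : Set Ω → ℝ} {K : ℝ} (hμ0 : μ ∅ = 0) (hm0 : m ∅ = 0)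
    (hle : ∀ A ∈ 𝒜, μ A ≤ K * m A) {a : Ω → ℝ} (ha : IsSimple 𝒜 a) (h : 0 ≤ a) :
    simpleInt μ a ≤ K * simpleInt m a := by
  rw [simpleInt_eq_sum hμ0 (s := ha.1.toFinset) (by simp),
    simpleInt_eq_sum hm0 (s := ha.1.toFinset) (by simp), Finset.mul_sum]
  refine Finset.sum_le_sum fun c hc => ?_
  obtain ⟨x, rfl⟩ := ha.1.mem_toFinset.1 hc
  rw [mul_left_comm]
  exact mul_le_mul_of_nonneg_left (hle _ (ha.2 _)) (h x)

section Positive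

variable (hA : IsAlg 𝒜) (hm : IsFinAdd 𝒜 m) (hmp : IsPos 𝒜 m)
include hA hm hmp

theorem IsFinAdd.mono_s15 {A B : Set Ω} (hAm : A ∈ 𝒜) (hBm : B ∈ 𝒜) (hAB : A ⊆ B) : m A ≤ m B := by
  rw [← union_sdiff_cancel hAB, hm.2.1 A hAm _ (hA.diff_mem_s15 hBm hAm) disjoint_sdiff_right]
  linarith [hmp _ (hA.diff_mem_s15 hBm hAm)]

theorem IsFinAdd.union_le {A B : Set Ω} (hAm : A ∈ 𝒜) (hBm : B ∈ 𝒜) : m (A ∪ B) ≤ m A + m B := by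
  rw [← union_sdiff_self, hm.2.1 A hAm _ (hA.diff_mem_s15 hBm hAm) disjoint_sdiff_right]
  linarith [hm.mono_s15 hA hmp (hA.diff_mem_s15 hBm hAm) hBm sdiff_subset]

variable {a b : Ω → ℝ}

theorem simpleInt_mono (ha : IsSimple 𝒜 a) (hb : IsSimple 𝒜 b) (hab : a ≤ b) :
    simpleInt m a ≤ simpleInt m b := by
  have := simpleInt_nonneg hm.1 hmp (hb.sub hA ha) (sub_nonneg.2 hab)
  rw [simpleInt_sub hA hm hb ha] at this
  linarith

theorem abs_simpleInt_le (ha : IsSimple 𝒜 a) : |simpleInt m a| ≤ simpleInt m (fun x => |a x|) := by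
  have hadd := simpleInt_nonneg hm.1 hmp (ha.add hA (ha.abs hA)) fun x =>
    neg_le_iff_add_nonneg.1 (neg_abs_le (a x))
  rw [simpleInt_add hA hm ha (ha.abs hA)] at hadd
  exact abs_le.2 ⟨by linarith, simpleInt_mono hA hm hmp ha (ha.abs hA) fun x => le_abs_self _⟩

theorem simpleInt_indicator_le_mul {A : Set Ω} (hAm : A ∈ 𝒜) (ha : IsSimple 𝒜 a) {M : ℝ}
    (haM : ∀ x, a x ≤ M) : simpleInt m (A.indicator a) ≤ M * m A := by
  rw [← simpleInt_indicator_one hm.1 A, ← simpleInt_smul hA hm (IsSimple.indicator_one hA hAm)]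
  refine simpleInt_mono hA hm hmp (ha.indicator hA hAm) ((IsSimple.indicator_one hA hAm).smul hA M)
    fun x => ?_
  by_cases hx : x ∈ A <;> simp [hx, haM x]

theorem simpleInt_indicator_le (ha : IsSimple 𝒜 a) (h : 0 ≤ a) {A : Set Ω} (hAm : A ∈ 𝒜) :
    simpleInt m (A.indicator a) ≤ simpleInt m a :=
  simpleInt_mono hA hm hmp (ha.indicator hA hAm) ha (indicator_le_self' fun x _ => h x)

theorem simpleInt_le_indicator_add (ha : IsSimple 𝒜 a) {ε : ℝ} (hε : 0 ≤ ε) {A : Set Ω}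
    (hAm : A ∈ 𝒜) (hcover : {x | ε ≤ a x} ⊆ A) :
    simpleInt m a ≤ simpleInt m (A.indicator a) + ε * m univ := by
  conv_lhs => rw [← indicator_self_add_compl A a]
  rw [simpleInt_add hA hm (ha.indicator hA hAm) (ha.indicator hA (hA.compl_mem_s15 hAm)),
    ← simpleInt_const hm.1]
  refine (add_le_add_iff_left _).2 (simpleInt_mono hA hm hmp (ha.indicator hA (hA.compl_mem_s15 hAm))
    (IsSimple.const hA ε) fun x => ?_)
  by_cases hx : x ∈ A
  · simpa [hx] using hε
  · simpa [hx] using (not_le.1 fun h => hx (hcover h)).le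

theorem simpleInt_indicator_abs_sub_le (ha : IsSimple 𝒜 a) (hb : IsSimple 𝒜 b) {A : Set Ω}
    (hAm : A ∈ 𝒜) :
    simpleInt m (A.indicator fun x => |a x - b x|) ≤
      simpleInt m (A.indicator fun x => |a x|) + simpleInt m (A.indicator fun x => |b x|) := by
  rw [← simpleInt_add hA hm ((ha.abs hA).indicator hA hAm) ((hb.abs hA).indicator hA hAm),
    ← indicator_add']
  exact simpleInt_mono hA hm hmp (((ha.sub hA hb).abs hA).indicator hA hAm)
    (((ha.abs hA).add hA (hb.abs hA)).indicator hA hAm)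
    fun x => indicator_le_indicator (abs_sub _ _)

end Positive

section OuterMeasure

theorem outerOf_le (hmp : IsPos 𝒜 m) {S A : Set Ω} (hAm : A ∈ 𝒜) (hSA : S ⊆ A) :
    outerOf 𝒜 m S ≤ m A :=
  csInf_le (⟨0, by rintro _ ⟨B, hB, _, rfl⟩; exact hmp B hB⟩ :
    BddBelow {x | ∃ B ∈ 𝒜, S ⊆ B ∧ x = m B}) ⟨A, hAm, hSA, rfl⟩

variable (hA : IsAlg 𝒜)
include hA

theorem exists_mem_superset_lt_of_outerOf_lt {S : Set Ω} {δ : ℝ} (h : outerOf 𝒜 m S < δ) :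
    ∃ A ∈ 𝒜, S ⊆ A ∧ m A < δ := by
  obtain ⟨_, ⟨A, hAm, hSA, rfl⟩, hlt⟩ := exists_lt_of_csInf_lt
    (s := {x | ∃ A ∈ 𝒜, S ⊆ A ∧ x = m A}) ⟨m univ, univ, hA.univ_mem, subset_univ S, rfl⟩ h
  exact ⟨A, hAm, hSA, hlt⟩

theorem outerOf_nonneg (hmp : IsPos 𝒜 m) (S : Set Ω) : 0 ≤ outerOf 𝒜 m S :=
  le_csInf ⟨m univ, univ, hA.univ_mem, subset_univ S, rfl⟩
    (by rintro _ ⟨A, hAm, _, rfl⟩; exact hmp A hAm)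

theorem outerOf_mono (hmp : IsPos 𝒜 m) {S T : Set Ω} (hST : S ⊆ T) :
    outerOf 𝒜 m S ≤ outerOf 𝒜 m T :=
  le_csInf ⟨m univ, univ, hA.univ_mem, subset_univ T, rfl⟩
    (by rintro _ ⟨A, hAm, hTA, rfl⟩; exact outerOf_le hmp hAm (hST.trans hTA))

theorem outerOf_empty (hm : IsFinAdd 𝒜 m) (hmp : IsPos 𝒜 m) : outerOf 𝒜 m ∅ = 0 :=
  le_antisymm (hm.1 ▸ outerOf_le hmp hA.empty_mem subset_rfl) (outerOf_nonneg hA hmp ∅)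

theorem outerOf_le_add (hm : IsFinAdd 𝒜 m) (hmp : IsPos 𝒜 m) {S S₁ S₂ : Set Ω}
    (hS : S ⊆ S₁ ∪ S₂) : outerOf 𝒜 m S ≤ outerOf 𝒜 m S₁ + outerOf 𝒜 m S₂ := by
  refine le_of_forall_pos_lt_add fun ε hε => ?_
  obtain ⟨A₁, hA₁, hS₁, hlt₁⟩ :=
    exists_mem_superset_lt_of_outerOf_lt hA (lt_add_of_pos_right (outerOf 𝒜 m S₁) (half_pos hε))
  obtain ⟨A₂, hA₂, hS₂, hlt₂⟩ :=
    exists_mem_superset_lt_of_outerOf_lt hA (lt_add_of_pos_right (outerOf 𝒜 m S₂) (half_pos hε))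
  calc outerOf 𝒜 m S ≤ m (A₁ ∪ A₂) :=
        outerOf_le hmp (hA.union_mem_s15 hA₁ hA₂) (hS.trans (union_subset_union hS₁ hS₂))
    _ ≤ m A₁ + m A₂ := hm.union_le hA hmp hA₁ hA₂
    _ < _ := by linarith

theorem outerOf_le_mul {μ : Set Ω → ℝ} (hμp : IsPos 𝒜 μ) {K : ℝ} (hK : 0 ≤ K)
    (hle : ∀ A ∈ 𝒜, μ A ≤ K * m A) (S : Set Ω) : outerOf 𝒜 μ S ≤ K * outerOf 𝒜 m S := by
  refine le_of_forall_pos_lt_add fun ε hε => ?_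
  have hδ : 0 < ε / (K + 1) := by positivity
  obtain ⟨A, hAm, hSA, hlt⟩ :=
    exists_mem_superset_lt_of_outerOf_lt hA (lt_add_of_pos_right (outerOf 𝒜 m S) hδ)
  calc outerOf 𝒜 μ S ≤ K * m A := (outerOf_le hμp hAm hSA).trans (hle A hAm)
    _ ≤ K * (outerOf 𝒜 m S + ε / (K + 1)) := by gcongr
    _ < K * outerOf 𝒜 m S + ε := by
      rw [mul_add, add_lt_add_iff_left, mul_div_assoc', div_lt_iff₀ (by positivity)]
      nlinarith

end OuterMeasure

theorem exists_pos_bound_of_finite_range {g : ℕ → Ω → ℝ} (hg : ∀ n, (range (g n)).Finite)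
    (N : ℕ) : ∃ M > 0, ∀ n ≤ N, ∀ x, |g n x| ≤ M := by
  obtain ⟨M, hM⟩ := ((finite_Iic N).biUnion fun n _ => ((hg n).image abs)).bddAbove
  refine ⟨max M 1, by positivity, fun n hn x => le_max_of_le_left (hM ?_)⟩
  exact mem_biUnion (mem_Iic.2 hn) ⟨g n x, ⟨x, rfl⟩, rfl⟩

namespace ApproxSeq

variable (hA : IsAlg 𝒜) (hm : IsFinAdd 𝒜 m) (hmp : IsPos 𝒜 m) {f : Ω → ℝ} {g h : ℕ → Ω → ℝ}
include hA hm hmp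

theorem uniform_absolute_continuity (hg : ApproxSeq 𝒜 m f g) {η : ℝ} (hη : 0 < η) :
    ∃ δ > 0, ∀ n, ∀ A ∈ 𝒜, m A < δ → simpleInt m (A.indicator fun x => |g n x|) < η := by
  obtain ⟨N, hN⟩ := hg.2.1 (η / 2) (half_pos hη)
  obtain ⟨M, hM0, hM⟩ := exists_pos_bound_of_finite_range (fun n => (hg.1 n).1) N
  refine ⟨η / 2 / M, by positivity, fun n A hAm hmA => ?_⟩
  have habs : ∀ k, IsSimple 𝒜 fun x => |g k x| := fun k => (hg.1 k).abs hA
  have hsmall : ∀ k ≤ N, simpleInt m (A.indicator fun x => |g k x|) < η / 2 := fun k hk =>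
    calc _ ≤ M * m A := simpleInt_indicator_le_mul hA hm hmp hAm (habs k) (hM k hk)
      _ < η / 2 := by rwa [lt_div_iff₀' hM0] at hmA
  rcases le_or_gt n N with hn | hn
  · linarith [hsmall n hn]
  have hdiff : IsSimple 𝒜 fun x => |g n x - g N x| := ((hg.1 n).sub hA (hg.1 N)).abs hA
  calc simpleInt m (A.indicator fun x => |g n x|)
      ≤ simpleInt m ((A.indicator fun x => |g n x - g N x|) + A.indicator fun x => |g N x|) := by
        refine simpleInt_mono hA hm hmp ((habs n).indicator hA hAm)
          ((hdiff.indicator hA hAm).add hA ((habs N).indicator hA hAm)) fun x => ?_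
        by_cases hx : x ∈ A
        · simpa [hx] using abs_sub_abs_le_abs_sub (g n x) (g N x)
        · simp [hx]
    _ = simpleInt m (A.indicator fun x => |g n x - g N x|) +
          simpleInt m (A.indicator fun x => |g N x|) :=
        simpleInt_add hA hm (hdiff.indicator hA hAm) ((habs N).indicator hA hAm)
    _ < η / 2 + η / 2 := add_lt_add
        ((simpleInt_indicator_le hA hm hmp hdiff (fun x => abs_nonneg _) hAm).trans_lt
          (hN n hn.le N le_rfl)) (hsmall N le_rfl)
    _ = η := add_halves η

theorem tendsto_simpleInt_abs_sub (hg : ApproxSeq 𝒜 m f g) (hh : ApproxSeq 𝒜 m f h) :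
    Tendsto (fun n => simpleInt m fun x => |g n x - h n x|) atTop (𝓝 0) := by
  have hdiff : ∀ n, IsSimple 𝒜 fun x => |g n x - h n x| := fun n =>
    ((hg.1 n).sub hA (hh.1 n)).abs hA
  refine tendsto_order.2 ⟨fun ρ hρ => Eventually.of_forall fun n =>
    hρ.trans_le (simpleInt_nonneg hm.1 hmp (hdiff n) fun x => abs_nonneg _), fun ρ hρ => ?_⟩
  obtain ⟨δg, hδg, hg_small⟩ := hg.uniform_absolute_continuity hA hm hmp (by positivity : 0 < ρ / 3)
  obtain ⟨δh, hδh, hh_small⟩ := hh.uniform_absolute_continuity hA hm hmp (by positivity : 0 < ρ / 3)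
  have hmU := hmp _ hA.univ_mem
  set ε := ρ / 3 / (m univ + 1) with hε_def
  have hε : 0 < ε := by positivity
  have hεmU : ε * m univ < ρ / 3 := by
    rw [hε_def, div_mul_eq_mul_div, div_lt_iff₀ (by positivity)]
    nlinarith
  have hδ : 0 < min δg δh / 2 := by positivity
  filter_upwards [(hg.2.2 (ε / 2) (half_pos hε)).eventually_lt_const hδ,
    (hh.2.2 (ε / 2) (half_pos hε)).eventually_lt_const hδ] with n hgn hhn
  have hcover : {x | ε ≤ |g n x - h n x|} ⊆
      {x | ε / 2 ≤ |g n x - f x|} ∪ {x | ε / 2 ≤ |h n x - f x|} := by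
    intro x hx
    by_contra hx'
    simp only [mem_union, mem_ofPred_eq, not_or, not_le] at hx hx'
    linarith [abs_sub_le (g n x) (f x) (h n x), abs_sub_comm (f x) (h n x)]
  obtain ⟨A, hAm, hDA, hmA⟩ := exists_mem_superset_lt_of_outerOf_lt hA
    ((outerOf_le_add hA hm hmp hcover).trans_lt (add_lt_add hgn hhn))
  have hmA' : m A < min δg δh := by linarith
  calc simpleInt m (fun x => |g n x - h n x|)
      ≤ simpleInt m (A.indicator fun x => |g n x - h n x|) + ε * m univ :=
        simpleInt_le_indicator_add hA hm hmp (hdiff n) hε.le hAm hDA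
    _ ≤ simpleInt m (A.indicator fun x => |g n x|) +
          simpleInt m (A.indicator fun x => |h n x|) + ε * m univ := by
        gcongr
        exact simpleInt_indicator_abs_sub_le hA hm hmp (hg.1 n) (hh.1 n) hAm
    _ < ρ / 3 + ρ / 3 + ρ / 3 := by
        gcongr
        · exact hg_small n A hAm (hmA'.trans_le (min_le_left _ _))
        · exact hh_small n A hAm (hmA'.trans_le (min_le_right _ _))
    _ = ρ := by ring

theorem cauchySeq_simpleInt (hg : ApproxSeq 𝒜 m f g) :
    CauchySeq fun n => simpleInt m (g n) := by
  refine Metric.cauchySeq_iff'.2 fun ε hε => ?_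
  obtain ⟨N, hN⟩ := hg.2.1 ε hε
  refine ⟨N, fun n hn => ?_⟩
  rw [Real.dist_eq, ← simpleInt_sub hA hm (hg.1 n) (hg.1 N)]
  exact (abs_simpleInt_le hA hm hmp ((hg.1 n).sub hA (hg.1 N))).trans_lt (hN n hn N le_rfl)

/-- The infimum defining `dsInt` is over a singleton: all approximating sequences of `f` have the
same limit of integrals. -/
theorem dsInt_eq (hg : ApproxSeq 𝒜 m f g) {L : ℝ}
    (hL : Tendsto (fun n => simpleInt m (g n)) atTop (𝓝 L)) : dsInt 𝒜 m f = L := by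
  suffices {I | ∃ g', ApproxSeq 𝒜 m f g' ∧ Tendsto (fun n => simpleInt m (g' n)) atTop (𝓝 I)} =
      {L} by rw [dsInt, this, csInf_singleton]
  refine eq_singleton_iff_unique_mem.2 ⟨⟨g, hg, hL⟩, ?_⟩
  rintro I ⟨g', hg', hI⟩
  have hdist : Tendsto (fun n => |simpleInt m (g' n) - simpleInt m (g n)|) atTop (𝓝 |I - L|) :=
    (hI.sub hL).abs
  refine eq_of_abs_sub_nonpos (le_of_tendsto_of_tendsto' hdist
    (tendsto_simpleInt_abs_sub hA hm hmp hg' hg) fun n => ?_)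
  rw [← simpleInt_sub hA hm (hg'.1 n) (hg.1 n)]
  exact abs_simpleInt_le hA hm hmp ((hg'.1 n).sub hA (hg.1 n))

theorem tendsto_dsInt (hg : ApproxSeq 𝒜 m f g) :
    Tendsto (fun n => simpleInt m (g n)) atTop (𝓝 (dsInt 𝒜 m f)) := by
  obtain ⟨L, hL⟩ := cauchySeq_tendsto_of_complete (hg.cauchySeq_simpleInt hA hm hmp)
  rwa [hg.dsInt_eq hA hm hmp hL]

theorem abs (hg : ApproxSeq 𝒜 m f g) :
    ApproxSeq 𝒜 m (fun x => |f x|) fun n x => |g n x| := by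
  refine ⟨fun n => (hg.1 n).abs hA, fun ε hε => ?_, fun ε hε => ?_⟩
  · obtain ⟨N, hN⟩ := hg.2.1 ε hε
    refine ⟨N, fun p hp q hq => lt_of_le_of_lt ?_ (hN p hp q hq)⟩
    exact simpleInt_mono hA hm hmp ((((hg.1 p).abs hA).sub hA ((hg.1 q).abs hA)).abs hA)
      (((hg.1 p).sub hA (hg.1 q)).abs hA) fun x => abs_abs_sub_abs_le_abs_sub _ _
  · refine squeeze_zero (fun n => outerOf_nonneg hA hmp _)
      (fun n => outerOf_mono hA hmp fun x hx => ?_) (hg.2.2 ε hε)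
    exact (show ε ≤ _root_.abs (|g n x| - |f x|) from hx).trans (abs_abs_sub_abs_le_abs_sub _ _)

end ApproxSeq

theorem ApproxSeq.sub_simple (hA : IsAlg 𝒜) {f s : Ω → ℝ} {g : ℕ → Ω → ℝ}
    (hg : ApproxSeq 𝒜 m f g) (hs : IsSimple 𝒜 s) :
    ApproxSeq 𝒜 m (fun x => f x - s x) fun k x => g k x - s x := by
  refine ⟨fun k => (hg.1 k).sub hA hs, fun ε hε => ?_, fun ε hε => ?_⟩
  · simpa only [sub_sub_sub_cancel_right] using hg.2.1 ε hε
  · simpa only [sub_sub_sub_cancel_right] using hg.2.2 ε hε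

theorem ApproxSeq.of_le_mul (hA : IsAlg 𝒜) (hm0 : m ∅ = 0) {μ : Set Ω → ℝ} (hμ0 : μ ∅ = 0)
    (hμp : IsPos 𝒜 μ) {K : ℝ} (hK : 0 ≤ K) (hle : ∀ A ∈ 𝒜, μ A ≤ K * m A) {f : Ω → ℝ}
    {g : ℕ → Ω → ℝ} (hg : ApproxSeq 𝒜 m f g) : ApproxSeq 𝒜 μ f g := by
  refine ⟨hg.1, fun ε hε => ?_, fun ε hε => ?_⟩
  · obtain ⟨N, hN⟩ := hg.2.1 (ε / (K + 1)) (by positivity)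
    refine ⟨N, fun p hp q hq => ?_⟩
    calc simpleInt μ (fun x => |g p x - g q x|)
        ≤ K * simpleInt m (fun x => |g p x - g q x|) :=
          simpleInt_le_mul_of_le_mul hμ0 hm0 hle (((hg.1 p).sub hA (hg.1 q)).abs hA)
            fun x => abs_nonneg _
      _ ≤ K * (ε / (K + 1)) := by gcongr; exact (hN p hp q hq).le
      _ < ε := by rw [mul_div_assoc', div_lt_iff₀ (by positivity)]; linarith
  · refine squeeze_zero (fun n => outerOf_nonneg hA hμp _)
      (fun n => outerOf_le_mul hA hμp hK hle _) ?_
    simpa using (hg.2.2 ε hε).const_mul K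

section DunfordSchwartz

variable (hA : IsAlg 𝒜) (hm : IsFinAdd 𝒜 m) (hmp : IsPos 𝒜 m)
include hA hm hmp

theorem IsSimple.approxSeq {s : Ω → ℝ} (hs : IsSimple 𝒜 s) : ApproxSeq 𝒜 m s fun _ => s := by
  refine ⟨fun _ => hs, fun ε hε => ⟨0, fun _ _ _ _ => ?_⟩, fun ε hε => ?_⟩
  · simpa [simpleInt_const hm.1] using hε
  · have : {x | ε ≤ |s x - s x|} = ∅ := eq_empty_of_forall_notMem fun x hx => by
      simp only [mem_ofPred_eq, sub_self, abs_zero] at hx; linarith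
    simp only [this, outerOf_empty hA hm hmp, tendsto_const_nhds]

theorem IsSimple.memL1 {s : Ω → ℝ} (hs : IsSimple 𝒜 s) : MemL1 𝒜 m s :=
  ⟨_, hs.approxSeq hA hm hmp⟩

theorem IsSimple.dsInt_eq {s : Ω → ℝ} (hs : IsSimple 𝒜 s) : dsInt 𝒜 m s = simpleInt m s :=
  (hs.approxSeq hA hm hmp).dsInt_eq hA hm hmp tendsto_const_nhds

theorem dsInt_abs_nonneg {f : Ω → ℝ} (hf : MemL1 𝒜 m f) : 0 ≤ dsInt 𝒜 m fun x => |f x| := by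
  obtain ⟨g, hg⟩ := hf
  exact ge_of_tendsto' ((hg.abs hA hm hmp).tendsto_dsInt hA hm hmp) fun n =>
    simpleInt_nonneg hm.1 hmp ((hg.1 n).abs hA) fun x => abs_nonneg _

theorem ApproxSeq.tendsto_dsInt_abs_sub {f : Ω → ℝ} {g : ℕ → Ω → ℝ} (hg : ApproxSeq 𝒜 m f g) :
    Tendsto (fun n => dsInt 𝒜 m fun x => |f x - g n x|) atTop (𝓝 0) := by
  have hlim : ∀ n, Tendsto (fun k => simpleInt m fun x => |g k x - g n x|) atTop
      (𝓝 (dsInt 𝒜 m fun x => |f x - g n x|)) := fun n =>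
    ((hg.sub_simple hA (hg.1 n)).abs hA hm hmp).tendsto_dsInt hA hm hmp
  refine tendsto_order.2 ⟨fun ε hε => Eventually.of_forall fun n => hε.trans_le
    (dsInt_abs_nonneg hA hm hmp ⟨_, hg.sub_simple hA (hg.1 n)⟩), fun ε hε => ?_⟩
  obtain ⟨N, hN⟩ := hg.2.1 (ε / 2) (half_pos hε)
  refine eventually_atTop.2 ⟨N, fun n hn => ?_⟩
  refine lt_of_le_of_lt (le_of_tendsto (hlim n) ?_) (half_lt_self hε)
  exact eventually_atTop.2 ⟨N, fun k hk => (hN k hk n hn).le⟩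

end DunfordSchwartz

theorem le_tv (hA : IsAlg 𝒜) (hm : IsFinAdd 𝒜 m) {E : Set Ω} (hE : E ∈ 𝒜) : m E ≤ tv 𝒜 m E := by
  obtain ⟨C, hC⟩ := hm.2.2
  have hbdd : BddAbove {x | ∃ B ∈ 𝒜, B ⊆ E ∧ x = m B - m (E \ B)} := by
    refine ⟨2 * C, ?_⟩
    rintro _ ⟨B, hB, -, rfl⟩
    linarith [le_abs_self (m B), neg_abs_le (m (E \ B)), hC B hB, hC _ (hA.diff_mem_s15 hE hB)]
  have h := le_csSup hbdd ⟨E, hE, subset_rfl, rfl⟩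
  rwa [sdiff_self, hm.1, sub_zero] at h

theorem tv_le_of_isPos (hA : IsAlg 𝒜) (hm : IsFinAdd 𝒜 m) (hmp : IsPos 𝒜 m) {E : Set Ω}
    (hE : E ∈ 𝒜) : tv 𝒜 m E ≤ m E := by
  refine csSup_le ⟨_, ∅, hA.empty_mem, empty_subset E, rfl⟩ ?_
  rintro _ ⟨B, hB, hBE, rfl⟩
  linarith [hm.mono_s15 hA hmp hB hE hBE, hmp _ (hA.diff_mem_s15 hE hB)]

theorem AC_of_le_mul (hA : IsAlg 𝒜) (hm : IsFinAdd 𝒜 m) {μ : Set Ω → ℝ} (hμ : IsFinAdd 𝒜 μ)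
    (hμp : IsPos 𝒜 μ) {K : ℝ} (hK : 0 ≤ K) (hle : ∀ A ∈ 𝒜, μ A ≤ K * m A) : AC 𝒜 μ m := by
  refine fun ε hε => ⟨ε / (K + 1), by positivity, fun E hE htv => ?_⟩
  calc tv 𝒜 μ E ≤ K * tv 𝒜 m E :=
        (tv_le_of_isPos hA hμ hμp hE).trans ((hle E hE).trans (by gcongr; exact le_tv hA hm hE))
    _ ≤ K * (ε / (K + 1)) := by gcongr
    _ < ε := by rw [mul_div_assoc', div_lt_iff₀ (by positivity)]; linarith

noncomputable def indicatorSetFun (φ : (Ω → ℝ) → ℝ) (B : Set Ω) : ℝ := φ (B.indicator 1)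

section Functional

variable {l : Set Ω → ℝ} {φ : (Ω → ℝ) → ℝ} (hA : IsAlg 𝒜) (hl : IsFinAdd 𝒜 l) (hpos : IsPos 𝒜 l)
    (hadd : ∀ f g : Ω → ℝ, MemL1 𝒜 l f → MemL1 𝒜 l g → φ (f + g) = φ f + φ g)
    (hsmul : ∀ (c : ℝ) (f : Ω → ℝ), MemL1 𝒜 l f → φ (c • f) = c * φ f)

include hA hl hpos hsmul in
theorem map_zero_of_smul : φ 0 = 0 := by
  simpa using hsmul 0 0 ((IsSimple.const hA 0).memL1 hA hl hpos)

include hA hl hpos hsmul in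
theorem indicatorSetFun_empty : indicatorSetFun φ ∅ = 0 := by
  rw [indicatorSetFun, indicator_empty]
  exact map_zero_of_smul hA hl hpos hsmul

include hA hl hpos hadd hsmul in
theorem map_eq_simpleInt_indicatorSetFun {s : Ω → ℝ} (hs : IsSimple 𝒜 s) :
    φ s = simpleInt (indicatorSetFun φ) s := by
  classical
  have hmap_sum : ∀ F : Finset ℝ, IsSimple 𝒜 (∑ c ∈ F, c • (s ⁻¹' {c}).indicator 1) ∧
      φ (∑ c ∈ F, c • (s ⁻¹' {c}).indicator 1) = ∑ c ∈ F, c * indicatorSetFun φ (s ⁻¹' {c}) := by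
    intro F
    induction F using Finset.induction_on with
    | empty =>
      simp only [Finset.sum_empty]
      exact ⟨IsSimple.const hA 0, map_zero_of_smul hA hl hpos hsmul⟩
    | insert c F hc ih =>
      have hind := IsSimple.indicator_one hA (hs.2 c)
      simp only [Finset.sum_insert hc]
      refine ⟨(hind.smul hA c).add hA ih.1, ?_⟩
      rw [hadd _ _ ((hind.smul hA c).memL1 hA hl hpos) (ih.1.memL1 hA hl hpos),
        hsmul c _ (hind.memL1 hA hl hpos), ih.2, indicatorSetFun]
  have hdecomp : s = ∑ c ∈ hs.1.toFinset, c • (s ⁻¹' {c}).indicator 1 := by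
    ext x
    rw [Finset.sum_apply, Finset.sum_eq_single_of_mem (s x) (by simp) fun c _ hc => by
      simp [indicator_of_notMem (show x ∉ s ⁻¹' {c} from Ne.symm hc)]]
    simp
  rw [simpleInt_eq_sum (indicatorSetFun_empty hA hl hpos hsmul) (s := hs.1.toFinset) (by simp)]
  conv_lhs => rw [hdecomp]
  exact (hmap_sum _).2

variable {K : ℝ} (hbound : ∀ f, MemL1 𝒜 l f → |φ f| ≤ K * dsInt 𝒜 l fun x => |f x|)

include hA hl hpos hbound in
theorem abs_indicatorSetFun_le_mul {B : Set Ω} (hB : B ∈ 𝒜) :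
    |indicatorSetFun φ B| ≤ K * l B := by
  have hind := IsSimple.indicator_one hA hB
  have habs : (fun x => |B.indicator (1 : Ω → ℝ) x|) = B.indicator 1 :=
    funext fun x => abs_of_nonneg (indicator_nonneg (fun _ _ => zero_le_one) x)
  simpa [indicatorSetFun, habs, hind.dsInt_eq hA hl hpos, simpleInt_indicator_one hl.1] using
    hbound _ (hind.memL1 hA hl hpos)

include hA hl hpos hadd hsmul hbound in
theorem isFinAdd_indicatorSetFun (hK : 0 ≤ K) : IsFinAdd 𝒜 (indicatorSetFun φ) := by
  refine ⟨indicatorSetFun_empty hA hl hpos hsmul, fun A hA' B hB hAB => ?_, K * l univ,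
    fun A hA' => ?_⟩
  · rw [indicatorSetFun, indicator_union_of_disjoint hAB]
    exact hadd _ _ ((IsSimple.indicator_one hA hA').memL1 hA hl hpos)
      ((IsSimple.indicator_one hA hB).memL1 hA hl hpos)
  · exact (abs_indicatorSetFun_le_mul hA hl hpos hbound hA').trans
      (by gcongr; exact hl.mono_s15 hA hpos hA' hA.univ_mem (subset_univ A))

include hA hl hpos hadd hbound in
theorem tendsto_map_of_approxSeq {f : Ω → ℝ} {g : ℕ → Ω → ℝ} (hg : ApproxSeq 𝒜 l f g) :
    Tendsto (fun n => φ (g n)) atTop (𝓝 (φ f)) := by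
  have hdiff : ∀ n, MemL1 𝒜 l fun x => f x - g n x := fun n => ⟨_, hg.sub_simple hA (hg.1 n)⟩
  have hsplit : ∀ n, φ f = φ (fun x => f x - g n x) + φ (g n) := fun n => by
    rw [← hadd _ _ (hdiff n) ((hg.1 n).memL1 hA hl hpos)]
    congr 1; ext x; simp
  refine tendsto_iff_dist_tendsto_zero.2 (squeeze_zero (fun n => dist_nonneg) (fun n => ?_)
    (by simpa using (hg.tendsto_dsInt_abs_sub hA hl hpos).const_mul K))
  rw [Real.dist_eq, abs_sub_comm, hsplit n, add_sub_cancel_right]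
  exact hbound _ (hdiff n)

include hA hl hpos hsmul hbound in
theorem indicatorSetFun_le_sSup_mul (hK : 0 ≤ K) {B : Set Ω} (hB : B ∈ 𝒜) (hlB : 0 < l B) :
    indicatorSetFun φ B ≤ (sSup {y | ∃ f : Ω → ℝ, MemL1 𝒜 l f ∧
      dsInt 𝒜 l (fun x => |f x|) ≤ 1 ∧ y = |φ f|}) * l B := by
  have hind := IsSimple.indicator_one hA hB
  have hbdd : BddAbove {y | ∃ f : Ω → ℝ, MemL1 𝒜 l f ∧
      dsInt 𝒜 l (fun x => |f x|) ≤ 1 ∧ y = |φ f|} := by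
    refine ⟨K, ?_⟩
    rintro _ ⟨f, hf, hf1, rfl⟩
    exact (hbound f hf).trans (mul_le_of_le_one_right hK hf1)
  set f₀ := (l B)⁻¹ • B.indicator (1 : Ω → ℝ)
  have hf₀ : IsSimple 𝒜 f₀ := hind.smul hA _
  have hf₀_norm : dsInt 𝒜 l (fun x => |f₀ x|) = 1 := by
    have habs : (fun x => |f₀ x|) = f₀ := funext fun x => abs_of_nonneg <|
      mul_nonneg (inv_nonneg.2 hlB.le) (indicator_nonneg (fun _ _ => zero_le_one) x)
    rw [habs, hf₀.dsInt_eq hA hl hpos, simpleInt_smul hA hl hind, simpleInt_indicator_one hl.1,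
      inv_mul_cancel₀ hlB.ne']
  have hφf₀ : φ f₀ = (l B)⁻¹ * indicatorSetFun φ B := hsmul _ _ (hind.memL1 hA hl hpos)
  calc indicatorSetFun φ B = φ f₀ * l B := by rw [hφf₀]; field_simp
    _ ≤ |φ f₀| * l B := by gcongr; exact le_abs_self _
    _ ≤ _ := by gcongr; exact le_csSup hbdd ⟨f₀, hf₀.memL1 hA hl hpos, hf₀_norm.le, rfl⟩

end Functional

end

/-- representation of a positive continuous linear functional on L¹(λ). -/
theorem functional_representation {Ω : Type*} (𝒜 : Set (Set Ω)) (hA : IsAlg 𝒜)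
    (l : Set Ω → ℝ) (hl : IsFinAdd 𝒜 l) (hpos : IsPos 𝒜 l)
    (φ : (Ω → ℝ) → ℝ)
    (hadd : ∀ f g : Ω → ℝ, MemL1 𝒜 l f → MemL1 𝒜 l g → φ (f + g) = φ f + φ g)
    (hsmul : ∀ (c : ℝ) (f : Ω → ℝ), MemL1 𝒜 l f → φ (c • f) = c * φ f)
    (hφpos : ∀ f : Ω → ℝ, MemL1 𝒜 l f → (∀ x, 0 ≤ f x) → 0 ≤ φ f)
    (hcont : ∃ Kc : ℝ, ∀ f : Ω → ℝ, MemL1 𝒜 l f →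
      |φ f| ≤ Kc * dsInt 𝒜 l (fun x => |f x|)) :
    ∃ μ : Set Ω → ℝ, IsFinAdd 𝒜 μ ∧ IsPos 𝒜 μ ∧ AC 𝒜 μ l ∧
      (∀ f : Ω → ℝ, MemL1 𝒜 l f → φ f = dsInt 𝒜 μ f) ∧
      ∀ B ∈ 𝒜, 0 < l B →
        μ B ≤ (sSup {y | ∃ f : Ω → ℝ, MemL1 𝒜 l f ∧
          dsInt 𝒜 l (fun x => |f x|) ≤ 1 ∧ y = |φ f|}) * l B := by
  obtain ⟨Kc, hKc⟩ := hcont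
  set K := max Kc 0
  have hK : 0 ≤ K := le_max_right _ _
  have hbound : ∀ f, MemL1 𝒜 l f → |φ f| ≤ K * dsInt 𝒜 l fun x => |f x| := fun f hf =>
    (hKc f hf).trans (by gcongr; exacts [dsInt_abs_nonneg hA hl hpos hf, le_max_left _ _])
  set μ := indicatorSetFun φ
  have hμ : IsFinAdd 𝒜 μ := isFinAdd_indicatorSetFun hA hl hpos hadd hsmul hbound hK
  have hμp : IsPos 𝒜 μ := fun B hB => hφpos _ ((IsSimple.indicator_one hA hB).memL1 hA hl hpos)
    (indicator_nonneg fun _ _ => zero_le_one)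
  have hμl : ∀ B ∈ 𝒜, μ B ≤ K * l B := fun B hB =>
    (le_abs_self _).trans (abs_indicatorSetFun_le_mul hA hl hpos hbound hB)
  refine ⟨μ, hμ, hμp, AC_of_le_mul hA hl hμ hμp hK hμl, fun f ⟨g, hg⟩ => ?_,
    fun B hB hlB => indicatorSetFun_le_sSup_mul hA hl hpos hsmul hbound hK hB hlB⟩
  refine ((hg.of_le_mul hA hl.1 hμ.1 hμp hK hμl).dsInt_eq hA hμ hμp ?_).symm
  refine (tendsto_map_of_approxSeq hA hl hpos hadd hbound hg).congr fun n => ?_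
  exact map_eq_simpleInt_indicatorSetFun hA hl hpos hadd hsmul (hg.1 n)
end
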